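/- arXiv:1512.07785 — 12 statements merged into one kernel-verified Lean document; each statement's English description precedes it below -/
import Mathlib

section
/- Let Q be a finite quiver, d a dimension vector, k a field, and θ : Q_0 → ℚ a weight with ∑_q θ_q·d_q = 0. If V is a θ-stable representation of (Q,d) over k, then every nonzero endomorphism ψ = (ψ_q) of V (i.e. ψ_q ≠ 0 for some vertex q) has all components ψ_q bijective; in particular, the endomorphism ring of V is a division ring. -/
/-!
The kernel and the image of `ψ` are subrepresentations whose dimension vectors add up to `d`,
so their weights add up to `θ(d) = 0`. Semistability makes both weights nonpositive, hence both
vanish, and stability then forces the kernel to be `0` or all of `V`. Since `ψ ≠ 0` it is `0`,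
and an injective endomorphism of a finite-dimensional space is bijective.
-/

noncomputable section

open Finset

variable {k : Type*} [Field k]

/-- A family of subspaces `W q ⊆ k^{d q}` is a subrepresentation of the representation
given by the linear maps `φ a : k^{d (src a)} → k^{d (tgt a)}`. -/
def IsSubrep {V Ar : Type*} (src tgt : Ar → V) (d : V → ℕ)
    (φ : ∀ a : Ar, ((Fin (d (src a)) → k) →ₗ[k] (Fin (d (tgt a)) → k)))
    (W : ∀ q : V, Submodule k (Fin (d q) → k)) : Prop :=
  ∀ a : Ar, ∀ x ∈ W (src a), φ a x ∈ W (tgt a)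

/-- `θ(W) = ∑_q θ_q · dim W_q`. -/
def repWeight {V : Type*} [Fintype V] (d : V → ℕ) (θ : V → ℚ)
    (W : ∀ q : V, Submodule k (Fin (d q) → k)) : ℚ :=
  ∑ q, θ q * (Module.finrank k (W q) : ℚ)

/-- A representation is `θ`-semistable if `θ(W) ≤ 0` for every subrepresentation `W`. -/
def RepSemistable {V Ar : Type*} [Fintype V] (src tgt : Ar → V) (d : V → ℕ) (θ : V → ℚ)
    (φ : ∀ a : Ar, ((Fin (d (src a)) → k) →ₗ[k] (Fin (d (tgt a)) → k))) : Prop :=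
  ∀ W : ∀ q : V, Submodule k (Fin (d q) → k),
    IsSubrep src tgt d φ W → repWeight d θ W ≤ 0

/-- A representation is `θ`-stable if it is `θ`-semistable and `θ(W) < 0` for every
subrepresentation other than `0` and the whole representation. -/
def RepStable {V Ar : Type*} [Fintype V] (src tgt : Ar → V) (d : V → ℕ) (θ : V → ℚ)
    (φ : ∀ a : Ar, ((Fin (d (src a)) → k) →ₗ[k] (Fin (d (tgt a)) → k))) : Prop :=
  RepSemistable src tgt d θ φ ∧
  ∀ W : ∀ q : V, Submodule k (Fin (d q) → k),
    IsSubrep src tgt d φ W →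
    W ≠ (fun _ => ⊥) → W ≠ (fun _ => ⊤) →
    repWeight d θ W < 0

section

variable {V Ar : Type*} {src tgt : Ar → V} {d : V → ℕ}
  {φ : ∀ a : Ar, ((Fin (d (src a)) → k) →ₗ[k] (Fin (d (tgt a)) → k))}
  {ψ : ∀ q : V, (Fin (d q) → k) →ₗ[k] (Fin (d q) → k)}

theorem isSubrep_ker (hψ : ∀ a : Ar, (ψ (tgt a)).comp (φ a) = (φ a).comp (ψ (src a))) :
    IsSubrep src tgt d φ (fun q => LinearMap.ker (ψ q)) := by
  intro a x hx
  rw [LinearMap.mem_ker] at hx ⊢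
  rw [← LinearMap.comp_apply, hψ a, LinearMap.comp_apply, hx, map_zero]

theorem isSubrep_range (hψ : ∀ a : Ar, (ψ (tgt a)).comp (φ a) = (φ a).comp (ψ (src a))) :
    IsSubrep src tgt d φ (fun q => LinearMap.range (ψ q)) := by
  rintro a _ ⟨y, rfl⟩
  exact ⟨φ a y, by rw [← LinearMap.comp_apply, hψ a, LinearMap.comp_apply]⟩

theorem repWeight_ker_add_repWeight_range [Fintype V] (θ : V → ℚ)
    (ψ : ∀ q : V, (Fin (d q) → k) →ₗ[k] (Fin (d q) → k)) :
    repWeight d θ (fun q => LinearMap.ker (ψ q)) + repWeight d θ (fun q => LinearMap.range (ψ q))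
      = ∑ q, θ q * (d q : ℚ) := by
  simp only [repWeight, ← Finset.sum_add_distrib, ← mul_add]
  refine Finset.sum_congr rfl fun q _ => ?_
  have hrank := (ψ q).finrank_range_add_finrank_ker
  rw [Module.finrank_fin_fun] at hrank
  congr 1
  exact_mod_cast by omega

theorem RepStable.eq_bot_or_eq_top_of_repWeight_eq_zero [Fintype V] {θ : V → ℚ}
    (hstable : RepStable src tgt d θ φ) {W : ∀ q : V, Submodule k (Fin (d q) → k)}
    (hW : IsSubrep src tgt d φ W) (hzero : repWeight d θ W = 0) :
    W = (fun _ => ⊥) ∨ W = (fun _ => ⊤) := by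
  by_contra! h
  exact (hstable.2 W hW h.1 h.2).ne hzero

end

theorem endomorphism_of_stable_bijective_general
    {V Ar : Type*} [Fintype V]
    (src tgt : Ar → V) (d : V → ℕ) (θ : V → ℚ)
    (hθ : ∑ q, θ q * (d q : ℚ) = 0)
    (φ : ∀ a : Ar, ((Fin (d (src a)) → k) →ₗ[k] (Fin (d (tgt a)) → k)))
    (hstable : RepStable src tgt d θ φ)
    (ψ : ∀ q : V, (Fin (d q) → k) →ₗ[k] (Fin (d q) → k))
    (hψ : ∀ a : Ar, (ψ (tgt a)).comp (φ a) = (φ a).comp (ψ (src a)))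
    (hne : ∃ q, ψ q ≠ 0) :
    ∀ q, Function.Bijective (ψ q) := by
  obtain ⟨q₁, hq₁⟩ := hne
  have hsum := repWeight_ker_add_repWeight_range θ ψ
  have hker_le := hstable.1 _ (isSubrep_ker hψ)
  have hrange_le := hstable.1 _ (isSubrep_range hψ)
  have hker_zero : repWeight d θ (fun q => LinearMap.ker (ψ q)) = 0 := by linarith
  have hker_bot : ∀ q, LinearMap.ker (ψ q) = ⊥ := by
    rcases hstable.eq_bot_or_eq_top_of_repWeight_eq_zero (isSubrep_ker hψ) hker_zero with h | h
    · exact congrFun h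
    · exact absurd (LinearMap.ker_eq_top.mp (congrFun h q₁)) hq₁
  intro q
  have hinj := LinearMap.ker_eq_bot.mp (hker_bot q)
  exact ⟨hinj, LinearMap.injective_iff_surjective.mp hinj⟩

/-- Every nonzero endomorphism of a `θ`-stable representation of a finite quiver has all
its components bijective. -/
theorem endomorphism_of_stable_bijective
    {V Ar : Type*} [Fintype V] [Fintype Ar]
    (src tgt : Ar → V) (d : V → ℕ) (θ : V → ℚ)
    (hθ : ∑ q, θ q * (d q : ℚ) = 0)
    (φ : ∀ a : Ar, ((Fin (d (src a)) → k) →ₗ[k] (Fin (d (tgt a)) → k)))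
    (hstable : RepStable src tgt d θ φ)
    (ψ : ∀ q : V, (Fin (d q) → k) →ₗ[k] (Fin (d q) → k))
    (hψ : ∀ a : Ar, (ψ (tgt a)).comp (φ a) = (φ a).comp (ψ (src a)))
    (hne : ∃ q, ψ q ≠ 0) :
    ∀ q, Function.Bijective (ψ q) :=
  endomorphism_of_stable_bijective_general src tgt d θ hθ φ hstable ψ hψ hne
end
end

section
/- Let k be a field, n ≥ 1, θ ∈ ℚ^n with θ_i ≥ 0 for all i and ∑_i θ_i = 2, and s = (s_1,…,s_n) a tuple of vectors in k^2. Then: (a) s is θ-semistable if and only if θ_i = 0 for every i with s_i = 0, and for every 1-dimensional k-subspace L ⊆ k^2 one has ∑_{i : s_i ∈ L} θ_i ≤ 1; (b) s is θ-stable if and only if s_i ≠ 0 and θ_i > 0 for all i, and for every 1-dimensional k-subspace L ⊆ k^2 one has ∑_{i : s_i ∈ L} θ_i < 1. -/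
noncomputable section

open Finset
open scoped Classical

variable {k : Type*} [Field k]

/-- A pair `(U, W)` is a subrepresentation of the representation `s` of the quiver `Q_n`
(with dimension vector `(2;1,…,1)`) if `s i ∈ W` for all `i ∈ U`. -/
def QnIsSubrep {n : ℕ} (s : Fin n → Fin 2 → k) (U : Finset (Fin n))
    (W : Submodule k (Fin 2 → k)) : Prop :=
  ∀ i ∈ U, s i ∈ W

/-- `s` is `θ`-semistable: `θ(U,W) = -dim W + ∑_{i∈U} θ_i ≤ 0` for every subrepresentation. -/
def QnSemistable {n : ℕ} (θ : Fin n → ℚ) (s : Fin n → Fin 2 → k) : Prop :=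
  ∀ (U : Finset (Fin n)) (W : Submodule k (Fin 2 → k)), QnIsSubrep s U W →
    -(Module.finrank k W : ℚ) + ∑ i ∈ U, θ i ≤ 0

/-- `s` is `θ`-stable: semistable, and `θ(U,W) < 0` for every subrepresentation other than
`(∅, 0)` and `({1,…,n}, k²)`. -/
def QnStable {n : ℕ} (θ : Fin n → ℚ) (s : Fin n → Fin 2 → k) : Prop :=
  QnSemistable θ s ∧
  ∀ (U : Finset (Fin n)) (W : Submodule k (Fin 2 → k)), QnIsSubrep s U W →
    ¬(U = ∅ ∧ W = ⊥) → ¬(U = Finset.univ ∧ W = ⊤) →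
    -(Module.finrank k W : ℚ) + ∑ i ∈ U, θ i < 0

/-! Since the weights are nonnegative, for a fixed subspace `W` the largest subrepresentation
`({i | s i ∈ W}, W)` has the largest weight, so only `W` matters. It is `0`, a line, or `k²`;
the last imposes nothing because `∑ θ = 2`. For stability, the subrepresentations `({i}, 0)` and
`({1,…,n} \ {i}, k²)` force `s i ≠ 0` and `θ i > 0`. -/

theorem Submodule.eq_bot_or_finrank_eq_one_or_eq_top {K V : Type*} [DivisionRing K]
    [AddCommGroup V] [Module K V] (hV : Module.finrank K V = 2) (W : Submodule K V) :
    W = ⊥ ∨ Module.finrank K W = 1 ∨ W = ⊤ := by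
  have : FiniteDimensional K V := Module.finite_of_finrank_eq_succ hV
  have hle := W.finrank_le
  obtain h | h | h : Module.finrank K W = 0 ∨ Module.finrank K W = 1 ∨ Module.finrank K W = 2 := by
    omega
  · exact Or.inl (Submodule.finrank_eq_zero.mp h)
  · exact Or.inr (Or.inl h)
  · exact Or.inr (Or.inr (Submodule.eq_top_of_finrank_eq (h.trans hV.symm)))

section

variable {n : ℕ} {θ : Fin n → ℚ} {s : Fin n → Fin 2 → k}

theorem qnIsSubrep_filter_mem (W : Submodule k (Fin 2 → k)) :
    QnIsSubrep s (univ.filter fun i => s i ∈ W) W := by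
  intro i hi
  simpa using hi

theorem QnIsSubrep.sum_le_sum_filter_mem (hθ : ∀ i, 0 ≤ θ i) {U : Finset (Fin n)}
    {W : Submodule k (Fin 2 → k)} (h : QnIsSubrep s U W) :
    ∑ i ∈ U, θ i ≤ ∑ i ∈ univ.filter (fun i => s i ∈ W), θ i :=
  sum_le_sum_of_subset_of_nonneg (fun i hi => by simpa using h i hi) fun i _ _ => hθ i

theorem qnSemistable_iff_forall_submodule (hθ : ∀ i, 0 ≤ θ i) :
    QnSemistable θ s ↔ ∀ W : Submodule k (Fin 2 → k),
      ∑ i ∈ univ.filter (fun i => s i ∈ W), θ i ≤ Module.finrank k W := by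
  constructor
  · intro h W
    linarith [h _ W (qnIsSubrep_filter_mem W)]
  · intro h U W hUW
    linarith [h W, hUW.sum_le_sum_filter_mem hθ]

theorem sum_filter_mem_bot_le_zero_iff (hθ : ∀ i, 0 ≤ θ i) :
    ∑ i ∈ univ.filter (fun i => s i ∈ (⊥ : Submodule k (Fin 2 → k))), θ i ≤ 0 ↔
      ∀ i, s i = 0 → θ i = 0 := by
  rw [LE.le.ge_iff_eq' (sum_nonneg fun i _ => hθ i), sum_eq_zero_iff_of_nonneg fun i _ => hθ i]
  simp

theorem qnSemistable_iff (hθ : ∀ i, 0 ≤ θ i) (hsum : ∑ i, θ i = 2) :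
    QnSemistable θ s ↔
      ((∀ i, s i = 0 → θ i = 0) ∧
        ∀ L : Submodule k (Fin 2 → k), Module.finrank k L = 1 →
          ∑ i ∈ univ.filter (fun i => s i ∈ L), θ i ≤ 1) := by
  rw [qnSemistable_iff_forall_submodule hθ, ← sum_filter_mem_bot_le_zero_iff hθ]
  constructor
  · intro h
    refine ⟨by simpa using h ⊥, fun L hL => by simpa [hL] using h L⟩
  · rintro ⟨hbot, hline⟩ W
    rcases W.eq_bot_or_finrank_eq_one_or_eq_top (Module.finrank_fin_fun k) with rfl | hW | rfl
    · simpa using hbot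
    · simpa [hW] using hline W hW
    · simp [hsum]

theorem QnStable.ne_zero (h : QnStable θ s) (hθ : ∀ i, 0 ≤ θ i) (i : Fin n) : s i ≠ 0 := by
  intro hi
  have hsub : QnIsSubrep s {i} ⊥ := by simpa [QnIsSubrep] using hi
  have := h.2 {i} ⊥ hsub (by simp) (by simp)
  simp only [finrank_bot, sum_singleton, CharP.cast_eq_zero] at this
  linarith [hθ i]

theorem QnStable.pos (h : QnStable θ s) (hsum : ∑ i, θ i = 2) (i : Fin n) : 0 < θ i := by
  have hne : univ.erase i ≠ univ := fun he => by simpa using he.ge (mem_univ i)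
  have := h.2 (univ.erase i) ⊤ (fun _ _ => Submodule.mem_top) (by simp) (by simp [hne])
  rw [finrank_top, Module.finrank_fin_fun, sum_erase_eq_sub (mem_univ i), hsum] at this
  push_cast at this
  linarith

theorem QnStable.sum_filter_mem_lt_one (h : QnStable θ s) {L : Submodule k (Fin 2 → k)}
    (hL : Module.finrank k L = 1) : ∑ i ∈ univ.filter (fun i => s i ∈ L), θ i < 1 := by
  have hbot : L ≠ ⊥ := by rintro rfl; simp at hL
  have htop : L ≠ ⊤ := by rintro rfl; simp at hL
  have := h.2 _ L (qnIsSubrep_filter_mem L) (by simp [hbot]) (by simp [htop])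
  rw [hL] at this
  push_cast at this
  linarith

theorem qnStable_iff (hθ : ∀ i, 0 ≤ θ i) (hsum : ∑ i, θ i = 2) :
    QnStable θ s ↔
      ((∀ i, s i ≠ 0 ∧ 0 < θ i) ∧
        ∀ L : Submodule k (Fin 2 → k), Module.finrank k L = 1 →
          ∑ i ∈ univ.filter (fun i => s i ∈ L), θ i < 1) := by
  refine ⟨fun h => ⟨fun i => ⟨h.ne_zero hθ i, h.pos hsum i⟩,
    fun L hL => h.sum_filter_mem_lt_one hL⟩, ?_⟩
  rintro ⟨hpos, hline⟩
  refine ⟨(qnSemistable_iff hθ hsum).mpr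
    ⟨fun i hi => absurd hi (hpos i).1, fun L hL => (hline L hL).le⟩, ?_⟩
  intro U W hUW hbot htop
  rcases W.eq_bot_or_finrank_eq_one_or_eq_top (Module.finrank_fin_fun k) with rfl | hW | rfl
  · obtain ⟨i, hi⟩ := nonempty_iff_ne_empty.mpr fun hU => hbot ⟨hU, rfl⟩
    exact absurd (by simpa using hUW i hi) (hpos i).1
  · rw [hW, Nat.cast_one]
    linarith [hUW.sum_le_sum_filter_mem hθ, hline W hW]
  · obtain ⟨j, hj⟩ : ∃ j, j ∉ U := by
      by_contra! hU
      exact htop ⟨eq_univ_iff_forall.mpr hU, rfl⟩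
    have := sum_lt_sum_of_subset (subset_univ U) (mem_univ j) hj (hpos j).2 fun i _ _ => hθ i
    rw [finrank_top, Module.finrank_fin_fun]
    push_cast
    linarith

end

theorem qn_semistable_stable_criterion_general {n : ℕ}
    (θ : Fin n → ℚ) (hθ : ∀ i, 0 ≤ θ i) (hsum : ∑ i, θ i = 2)
    (s : Fin n → Fin 2 → k) :
    (QnSemistable θ s ↔
      ((∀ i, s i = 0 → θ i = 0) ∧
        ∀ L : Submodule k (Fin 2 → k), Module.finrank k L = 1 →
          ∑ i ∈ Finset.univ.filter (fun i => s i ∈ L), θ i ≤ 1)) ∧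
    (QnStable θ s ↔
      ((∀ i, s i ≠ 0 ∧ 0 < θ i) ∧
        ∀ L : Submodule k (Fin 2 → k), Module.finrank k L = 1 →
          ∑ i ∈ Finset.univ.filter (fun i => s i ∈ L), θ i < 1)) :=
  ⟨qnSemistable_iff hθ hsum, qnStable_iff hθ hsum⟩

/-- Characterisation of `θ`-(semi)stability of representations of `Q_n`. -/
theorem qn_semistable_stable_criterion {n : ℕ} (hn : 1 ≤ n)
    (θ : Fin n → ℚ) (hθ : ∀ i, 0 ≤ θ i) (hsum : ∑ i, θ i = 2)
    (s : Fin n → Fin 2 → k) :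
    (QnSemistable θ s ↔
      ((∀ i, s i = 0 → θ i = 0) ∧
        ∀ L : Submodule k (Fin 2 → k), Module.finrank k L = 1 →
          ∑ i ∈ Finset.univ.filter (fun i => s i ∈ L), θ i ≤ 1)) ∧
    (QnStable θ s ↔
      ((∀ i, s i ≠ 0 ∧ 0 < θ i) ∧
        ∀ L : Submodule k (Fin 2 → k), Module.finrank k L = 1 →
          ∑ i ∈ Finset.univ.filter (fun i => s i ∈ L), θ i < 1)) :=
  qn_semistable_stable_criterion_general θ hθ hsum s
end
end

section
/- Let k be an infinite field, n ≥ 1, and θ ∈ ℚ^n with ∑_i θ_i = 2. There exists a θ-semistable representation s = (s_1,…,s_n) of Q_n over k if and only if 0 ≤ θ_i ≤ 1 for all i. -/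
/-!
Semistability forces `0 ≤ θ_i ≤ 1`: test it on `({1,…,n} \ {i}, k²)` and on `({i}, k s_i)`.
Conversely, over an infinite field choose `s_i = (1, x_i)` with the `x_i` distinct, so that any two
of the `s_i` are linearly independent. Then a subspace containing `s_i` for all `i ∈ U` has
dimension at least `min (#U) 2`, while `0 ≤ θ ≤ 1` and `∑ θ_i = 2` give
`∑_{i ∈ U} θ_i ≤ min (#U) 2`.
-/

noncomputable section

open Finset
open scoped Classical

variable {k : Type*} [Field k]

open Module

section GeneralPosition

variable {K V ι : Type*} [Field K] [AddCommGroup V] [Module K V] [FiniteDimensional K V]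

theorem Submodule.two_le_finrank_of_linearIndependent_pair {W : Submodule K V} {x y : V}
    (hxy : LinearIndependent K ![x, y]) (hx : x ∈ W) (hy : y ∈ W) : 2 ≤ finrank K W := by
  have hspan : Submodule.span K (Set.range ![x, y]) ≤ W := by
    rw [Submodule.span_le, Matrix.range_cons, Matrix.range_cons, Matrix.range_empty]
    simp [Set.insert_subset_iff, hx, hy]
  simpa [finrank_span_eq_card hxy] using Submodule.finrank_mono hspan

theorem min_card_two_le_finrank_of_pairwise_linearIndependent {v : ι → V}
    (hv0 : ∀ i, v i ≠ 0) (hv : Pairwise fun i j => LinearIndependent K ![v i, v j])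
    {U : Finset ι} {W : Submodule K V} (hUW : ∀ i ∈ U, v i ∈ W) : min U.card 2 ≤ finrank K W := by
  by_cases hU : 1 < U.card
  · obtain ⟨a, ha, b, hb, hab⟩ := Finset.one_lt_card.mp hU
    exact (min_le_right _ _).trans
      (Submodule.two_le_finrank_of_linearIndependent_pair (hv hab) (hUW a ha) (hUW b hb))
  · obtain rfl | ⟨a, ha⟩ := U.eq_empty_or_nonempty
    · simp
    · have hW : W ≠ ⊥ := fun h => hv0 a (by simpa [h] using hUW a ha)
      have : finrank K W ≠ 0 := Submodule.finrank_eq_zero.not.mpr hW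
      omega

end GeneralPosition

theorem linearIndependent_pair_vecCons_one {K : Type*} [Field K] {a b : K} (hab : a ≠ b) :
    LinearIndependent K ![![1, a], ![1, b]] :=
  Matrix.linearIndependent_rows_of_det_ne_zero (A := !![1, a; 1, b])
    (by simpa [Matrix.det_fin_two_of, sub_eq_zero] using hab.symm)

theorem sum_le_min_card_two {ι : Type*} [Fintype ι] {θ : ι → ℚ}
    (hθ : ∀ i, 0 ≤ θ i ∧ θ i ≤ 1) (hsum : ∑ i, θ i = 2) (U : Finset ι) :
    ∑ i ∈ U, θ i ≤ min (U.card : ℚ) 2 := by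
  refine le_min ?_ ?_
  · simpa using Finset.sum_le_card_nsmul U θ 1 fun i _ => (hθ i).2
  · calc ∑ i ∈ U, θ i ≤ ∑ i, θ i :=
          Finset.sum_le_sum_of_subset_of_nonneg U.subset_univ fun i _ _ => (hθ i).1
      _ = 2 := hsum

variable {n : ℕ} {θ : Fin n → ℚ} {s : Fin n → Fin 2 → k}

theorem QnSemistable.nonneg (hs : QnSemistable θ s) (hsum : ∑ i, θ i = 2) (i : Fin n) :
    0 ≤ θ i := by
  have h := hs (Finset.univ.erase i) ⊤ fun _ _ => Submodule.mem_top
  rw [finrank_top, finrank_fin_fun, Finset.sum_erase_eq_sub (Finset.mem_univ i), hsum] at h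
  push_cast at h
  linarith

theorem QnSemistable.le_one (hs : QnSemistable θ s) (i : Fin n) : θ i ≤ 1 := by
  have h := hs {i} (k ∙ s i) fun j hj => by
    rw [Finset.mem_singleton.mp hj]
    exact Submodule.mem_span_singleton_self _
  have hdim : finrank k (k ∙ s i) ≤ 1 := by
    simpa using finrank_span_le_card ({s i} : Set (Fin 2 → k))
  rw [Finset.sum_singleton] at h
  have : (finrank k (k ∙ s i) : ℚ) ≤ 1 := by exact_mod_cast hdim
  linarith

theorem qnSemistable_of_pairwise_linearIndependent (hθ : ∀ i, 0 ≤ θ i ∧ θ i ≤ 1)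
    (hsum : ∑ i, θ i = 2) (hs0 : ∀ i, s i ≠ 0)
    (hs : Pairwise fun i j => LinearIndependent k ![s i, s j]) : QnSemistable θ s := by
  intro U W hUW
  have hdim : (min (U.card : ℚ) 2) ≤ finrank k W := by
    exact_mod_cast min_card_two_le_finrank_of_pairwise_linearIndependent hs0 hs hUW
  linarith [sum_le_min_card_two hθ hsum U]

theorem exists_qn_semistable_iff_general [Infinite k] {n : ℕ}
    (θ : Fin n → ℚ) (hsum : ∑ i, θ i = 2) :
    (∃ s : Fin n → Fin 2 → k, QnSemistable θ s) ↔ ∀ i, 0 ≤ θ i ∧ θ i ≤ 1 := by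
  refine ⟨fun ⟨s, hs⟩ i => ⟨hs.nonneg hsum i, hs.le_one i⟩, fun hθ => ?_⟩
  let x : Fin n ↪ k := Fin.valEmbedding.trans (Infinite.natEmbedding k)
  refine ⟨fun i => ![1, x i], qnSemistable_of_pairwise_linearIndependent hθ hsum ?_ ?_⟩
  · exact fun i h => one_ne_zero (congrFun h 0)
  · exact fun i j hij => linearIndependent_pair_vecCons_one (x.injective.ne hij)

/-- Over an infinite field a `θ`-semistable representation of `Q_n` exists if and only if
`0 ≤ θ_i ≤ 1` for all `i`. -/
theorem exists_qn_semistable_iff [Infinite k] {n : ℕ} (hn : 1 ≤ n)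
    (θ : Fin n → ℚ) (hsum : ∑ i, θ i = 2) :
    (∃ s : Fin n → Fin 2 → k, QnSemistable θ s) ↔ ∀ i, 0 ≤ θ i ∧ θ i ≤ 1 :=
  exists_qn_semistable_iff_general θ hsum
end
end

section
/- Let k be a field and s = (s_1,…,s_n) a tuple of nonzero vectors s_i ∈ k^2. Let {1,…,n} = ⊔_l J_l be the partition defined by: i and j lie in the same block if and only if s_i and s_j are linearly dependent. Then the set Θ(s) = {θ ∈ Δ(2,n) : s is θ-semistable} satisfies Θ(s) = {θ ∈ Δ(2,n) : ∑_{i∈J_l} θ_i ≤ 1 for every block J_l} = conv{ e_i + e_j : i and j lie in different blocks }. -/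
noncomputable section

open Finset
open scoped Classical

variable {k : Type*} [Field k]

/-- The hypersimplex `Δ(2,n) = {θ ∈ ℚ^n : 0 ≤ θ_i ≤ 1, ∑ θ_i = 2}`. -/
def hypersimplex (n : ℕ) : Set (Fin n → ℚ) :=
  {θ | (∀ i, 0 ≤ θ i ∧ θ i ≤ 1) ∧ ∑ i, θ i = 2}

/-!
For nonzero `s_i`, a subrepresentation `(U, W)` with `U ≠ ∅` has `dim W ≥ 1`; if `dim W = 1` then
`W` is the line `k s_i` of some `i ∈ U` and `U` lies in the block of `i`, and if `dim W = 2` the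
inequality follows from `∑_U θ ≤ ∑ θ = 2`. So semistability amounts to the block inequalities.

The blocks are the fibres of `i ↦ k s_i`. A point `θ` of the resulting polytope with a coordinate
strictly between `0` and `1` has at least two of them, since `∑ θ = 2` is an integer. Two of them,
`i` and `j`, can be chosen so that moving mass between them keeps every block sum at most `1`:
either they share a block, or each is the only nonzero entry of its block. Moving mass in both
directions until a coordinate reaches `0` or `1` puts `θ` on a segment whose endpoints have fewer
fractional coordinates. Induction on that number ends at `0/1`-vectors, which are the vertices
`e_i + e_j`.
-/

theorem mem_segment_add_smul_add_smul {𝕜 E : Type*} [Field 𝕜] [LinearOrder 𝕜]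
    [IsStrictOrderedRing 𝕜] [AddCommGroup E] [Module 𝕜 E] (x d : E) {a b : 𝕜} (ha : a ≤ 0)
    (hb : 0 ≤ b) : x ∈ segment 𝕜 (x + a • d) (x + b • d) :=
  mem_segment_iff_sameRay.2 <| by
    simpa [← neg_smul] using
      sameRay_smul_smul_of_mul_nonneg (v := d) (mul_nonneg (neg_nonneg.2 ha) hb)

theorem subset_convexHull_of_mem_segment {𝕜 E : Type*} [Semiring 𝕜] [PartialOrder 𝕜]
    [AddCommMonoid E] [Module 𝕜 E] {S V : Set E} (μ : E → ℕ)
    (h : ∀ x ∈ S, x ∉ V → ∃ y ∈ S, ∃ z ∈ S, μ y < μ x ∧ μ z < μ x ∧ x ∈ segment 𝕜 y z) :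
    S ⊆ convexHull 𝕜 V := by
  intro x hx
  induction hm : μ x using Nat.strong_induction_on generalizing x with
  | _ m ih =>
    by_cases hV : x ∈ V
    · exact subset_convexHull 𝕜 V hV
    obtain ⟨y, hy, z, hz, hyx, hzx, hxyz⟩ := h x hx hV
    exact (convex_convexHull 𝕜 V).segment_subset (ih _ (hm ▸ hyx) hy rfl)
      (ih _ (hm ▸ hzx) hz rfl) hxyz

section FiberPolytope

variable {ι β 𝕜 : Type*} [Fintype ι] [Field 𝕜] [LinearOrder 𝕜]

def fractionalCoords (θ : ι → 𝕜) : Finset ι := {i | θ i ≠ 0 ∧ θ i ≠ 1}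

variable {θ : ι → 𝕜}

theorem mem_fractionalCoords_iff {i : ι} (h0 : 0 ≤ θ i) (h1 : θ i ≤ 1) :
    i ∈ fractionalCoords θ ↔ 0 < θ i ∧ θ i < 1 := by
  simp [fractionalCoords, h0.lt_iff_ne, h1.lt_iff_ne, eq_comm]

theorem eq_zero_or_eq_one_of_notMem_fractionalCoords {i : ι} (hi : i ∉ fractionalCoords θ) :
    θ i = 0 ∨ θ i = 1 := by
  simpa [fractionalCoords, or_iff_not_imp_left] using hi

theorem sum_eq_card_of_notMem_fractionalCoords {s : Finset ι}
    (hs : ∀ t ∈ s, t ∉ fractionalCoords θ) : ∑ t ∈ s, θ t = #{t ∈ s | θ t = 1} := by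
  rw [← sum_boole]
  refine sum_congr rfl fun t ht => ?_
  rcases eq_zero_or_eq_one_of_notMem_fractionalCoords (hs t ht) with h | h <;> simp [h]

theorem fractionalCoords_ssubset {θ' : ι → 𝕜} {i j : ι} (hi : i ∈ fractionalCoords θ)
    (hj : j ∈ fractionalCoords θ) (heq : ∀ t, t ≠ i → t ≠ j → θ' t = θ t)
    (hleave : i ∉ fractionalCoords θ' ∨ j ∉ fractionalCoords θ') :
    fractionalCoords θ' ⊂ fractionalCoords θ := by
  refine (ssubset_iff_of_subset fun t ht => ?_).2 ?_
  · by_cases hti : t = i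
    · exact hti ▸ hi
    by_cases htj : t = j
    · exact htj ▸ hj
    simpa [fractionalCoords, heq t hti htj] using ht
  · rcases hleave with h | h
    exacts [⟨i, hi, h⟩, ⟨j, hj, h⟩]

variable [IsStrictOrderedRing 𝕜]

theorem card_fractionalCoords_ne_one [DecidableEq ι] (h0 : ∀ i, 0 ≤ θ i) (h1 : ∀ i, θ i ≤ 1)
    {m : ℕ} (hsum : ∑ i, θ i = m) : #(fractionalCoords θ) ≠ 1 := by
  intro hcard
  obtain ⟨i, hF⟩ := card_eq_one.1 hcard
  obtain ⟨hi0, hi1⟩ := (mem_fractionalCoords_iff (h0 i) (h1 i)).1 (hF ▸ mem_singleton_self i)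
  set c := #{t ∈ univ.erase i | θ t = 1}
  have hrest : ∑ t ∈ univ.erase i, θ t = c :=
    sum_eq_card_of_notMem_fractionalCoords fun t ht htF =>
      ne_of_mem_erase ht (mem_singleton.1 (hF ▸ htF))
  rw [← add_sum_erase _ _ (mem_univ i), hrest] at hsum
  have hlt : (c : 𝕜) < m := by linarith
  have hgt : (m : 𝕜) < c + 1 := by linarith
  norm_cast at hlt hgt
  omega

variable [DecidableEq β]

def fiberPolytope (f : ι → β) : Set (ι → 𝕜) :=
  {θ | (∀ i, 0 ≤ θ i) ∧ ∑ i, θ i = 2 ∧ ∀ i, ∑ j with f j = f i, θ j ≤ 1}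

variable {f : ι → β}

theorem le_one_of_mem_fiberPolytope (hθ : θ ∈ fiberPolytope f) (i : ι) : θ i ≤ 1 :=
  (single_le_sum (fun j _ => hθ.1 j) (by simp)).trans (hθ.2.2 i)

theorem convex_fiberPolytope : Convex 𝕜 (fiberPolytope (𝕜 := 𝕜) f) := by
  have hsum (s : Finset ι) : IsLinearMap 𝕜 fun θ : ι → 𝕜 => ∑ j ∈ s, θ j :=
    ⟨fun _ _ => sum_add_distrib, fun _ _ => by simp [mul_sum]⟩
  simp only [fiberPolytope, Set.ofPred_and, Set.ofPred_forall]
  exact (convex_iInter fun i => convex_halfSpace_ge (LinearMap.proj i).isLinear 0).inter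
    ((convex_hyperplane (hsum univ) 2).inter
      (convex_iInter fun i => convex_halfSpace_le (hsum _) 1))

theorem sum_fiber_eq_self (hθ : θ ∈ fiberPolytope f) {i : ι} (hi : i ∈ fractionalCoords θ)
    (hinj : ∀ t ∈ fractionalCoords θ, f t = f i → t = i) :
    ∑ j with f j = f i, θ j = θ i := by
  have hi0 := ((mem_fractionalCoords_iff (hθ.1 i) (le_one_of_mem_fiberPolytope hθ i)).1 hi).1
  refine sum_eq_single_of_mem i (by simp) fun t ht hti => ?_
  rw [mem_filter_univ] at ht
  refine (eq_zero_or_eq_one_of_notMem_fractionalCoords fun htF => hti (hinj t htF ht)).resolve_right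
    fun ht1 => ?_
  have : θ t + θ i ≤ ∑ j with f j = f i, θ j :=
    add_le_sum (fun j _ => hθ.1 j) (by simp [ht]) (by simp) hti
  linarith [hθ.2.2 i]

variable [DecidableEq ι]

def fiberPolytopeVertices (f : ι → β) : Set (ι → 𝕜) :=
  {v | ∃ i j, f i ≠ f j ∧ v = Pi.single i 1 + Pi.single j 1}

theorem fiberPolytopeVertices_subset : fiberPolytopeVertices f ⊆ fiberPolytope (𝕜 := 𝕜) f := by
  rintro _ ⟨i, j, hij, rfl⟩
  refine ⟨fun t => by simp only [Pi.add_apply, Pi.single_apply]; split_ifs <;> norm_num, ?_,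
    fun l => ?_⟩
  · simp [sum_add_distrib, sum_pi_single', one_add_one_eq_two]
  · simp only [Pi.add_apply, sum_add_distrib, sum_pi_single', mem_filter_univ]
    split_ifs <;> simp_all

theorem mem_fiberPolytopeVertices_of_fractionalCoords_eq_empty (hθ : θ ∈ fiberPolytope f)
    (hF : fractionalCoords θ = ∅) : θ ∈ fiberPolytopeVertices f := by
  have hcard : #{t | θ t = 1} = 2 := by
    have hsum := hθ.2.1
    rw [sum_eq_card_of_notMem_fractionalCoords (by simp [hF])] at hsum
    exact_mod_cast hsum
  obtain ⟨i, j, hij, hS⟩ := card_eq_two.1 hcard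
  have hmem (t : ι) : θ t = 1 ↔ t = i ∨ t = j := by
    simpa using congrArg (t ∈ ·) hS
  refine ⟨i, j, fun hf => ?_, funext fun t => ?_⟩
  · have : θ i + θ j ≤ ∑ t with f t = f i, θ t :=
      add_le_sum (fun t _ => hθ.1 t) (by simp) (by simp [hf]) hij
    linarith [hθ.2.2 i, (hmem i).2 (.inl rfl), (hmem j).2 (.inr rfl)]
  · by_cases hti : t = i
    · subst hti; simp [hij.symm, (hmem t).2 (.inl rfl)]
    by_cases htj : t = j
    · subst htj; simp [hti, (hmem t).2 (.inr rfl)]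
    have h01 := eq_zero_or_eq_one_of_notMem_fractionalCoords (θ := θ) (i := t) (by simp [hF])
    simpa [Pi.single_apply, hti, htj] using h01.resolve_right (by simp [hmem, hti, htj])

theorem add_smul_single_sub_single_mem_fiberPolytope (hθ : θ ∈ fiberPolytope f) {i j : ι}
    (hij : i ≠ j) (hfib : f i = f j ∨
      (∑ t with f t = f i, θ t = θ i ∧ ∑ t with f t = f j, θ t = θ j))
    {ε : 𝕜} (hi0 : 0 ≤ θ i + ε) (hi1 : θ i + ε ≤ 1) (hj0 : 0 ≤ θ j - ε) (hj1 : θ j - ε ≤ 1) :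
    θ + ε • (Pi.single i 1 - Pi.single j 1) ∈ fiberPolytope f := by
  have hsum (s : Finset ι) : ∑ t ∈ s, (θ + ε • (Pi.single i 1 - Pi.single j 1) : ι → 𝕜) t =
      ∑ t ∈ s, θ t + ε * ((if i ∈ s then 1 else 0) - if j ∈ s then 1 else 0) := by
    simp [sum_add_distrib, sum_sub_distrib, ← mul_sum, sum_pi_single', mul_sub]
  refine ⟨fun t => ?_, ?_, fun l => ?_⟩
  · by_cases hti : t = i
    · subst hti; simpa [hij] using hi0
    by_cases htj : t = j
    · subst htj; simpa [Ne.symm hij, ← sub_eq_add_neg] using hj0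
    simpa [hti, htj] using hθ.1 t
  · rw [hsum]; simp [hθ.2.1]
  · rw [hsum]
    by_cases hil : f i = f l <;> by_cases hjl : f j = f l <;> simp [hil, hjl]
    · exact hθ.2.2 l
    · rw [← hil, (hfib.resolve_left fun h => hjl (h ▸ hil)).1]; exact hi1
    · rw [← hjl, (hfib.resolve_left fun h => hil (h ▸ hjl)).2]; linarith
    · exact hθ.2.2 l

theorem exists_transfer_pair (hθ : θ ∈ fiberPolytope f) (hF : (fractionalCoords θ).Nonempty) :
    ∃ i ∈ fractionalCoords θ, ∃ j ∈ fractionalCoords θ, i ≠ j ∧ (f i = f j ∨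
      (∑ t with f t = f i, θ t = θ i ∧ ∑ t with f t = f j, θ t = θ j)) := by
  by_cases hsame : ∃ i ∈ fractionalCoords θ, ∃ j ∈ fractionalCoords θ, i ≠ j ∧ f i = f j
  · obtain ⟨i, hi, j, hj, hij, h⟩ := hsame
    exact ⟨i, hi, j, hj, hij, .inl h⟩
  have hinj {i : ι} (hi : i ∈ fractionalCoords θ) (t : ι) (ht : t ∈ fractionalCoords θ)
      (hft : f t = f i) : t = i := by
    by_contra hti; exact hsame ⟨t, ht, i, hi, hti, hft⟩
  have hcard : 1 < #(fractionalCoords θ) :=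
    lt_of_le_of_ne hF.card_pos
      (card_fractionalCoords_ne_one hθ.1 (le_one_of_mem_fiberPolytope hθ) (m := 2)
        (by exact_mod_cast hθ.2.1)).symm
  obtain ⟨i, hi, j, hj, hij⟩ := one_lt_card.1 hcard
  exact ⟨i, hi, j, hj, hij,
    .inr ⟨sum_fiber_eq_self hθ hi (hinj hi), sum_fiber_eq_self hθ hj (hinj hj)⟩⟩

theorem exists_mem_segment_of_fractionalCoords_nonempty (hθ : θ ∈ fiberPolytope f)
    (hF : (fractionalCoords θ).Nonempty) :
    ∃ y ∈ fiberPolytope f, ∃ z ∈ fiberPolytope f, #(fractionalCoords y) < #(fractionalCoords θ) ∧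
      #(fractionalCoords z) < #(fractionalCoords θ) ∧ θ ∈ segment 𝕜 y z := by
  obtain ⟨i, hi, j, hj, hij, hfib⟩ := exists_transfer_pair hθ hF
  have hθ1 := le_one_of_mem_fiberPolytope hθ
  obtain ⟨hi0, hi1⟩ := (mem_fractionalCoords_iff (hθ.1 i) (hθ1 i)).1 hi
  obtain ⟨hj0, hj1⟩ := (mem_fractionalCoords_iff (hθ.1 j) (hθ1 j)).1 hj
  set d : ι → 𝕜 := Pi.single i 1 - Pi.single j 1
  have hd (t : ι) (hti : t ≠ i) (htj : t ≠ j) (ε : 𝕜) : (θ + ε • d) t = θ t := by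
    simp [d, hti, htj]
  have hdi (ε : 𝕜) : (θ + ε • d) i = θ i + ε := by simp [d, hij]
  have hdj (ε : 𝕜) : (θ + ε • d) j = θ j - ε := by simp [d, hij.symm, sub_eq_add_neg]
  obtain ⟨a, ha0, hai, haj, ha⟩ : ∃ a, 0 < a ∧ a ≤ θ i ∧ a ≤ 1 - θ j ∧ (a = θ i ∨ a = 1 - θ j) :=
    ⟨_, lt_min hi0 (by linarith), min_le_left _ _, min_le_right _ _, min_choice _ _⟩
  obtain ⟨b, hb0, hbi, hbj, hb⟩ : ∃ b, 0 < b ∧ b ≤ 1 - θ i ∧ b ≤ θ j ∧ (b = 1 - θ i ∨ b = θ j) :=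
    ⟨_, lt_min (by linarith) hj0, min_le_left _ _, min_le_right _ _, min_choice _ _⟩
  refine ⟨θ + (-a) • d, ?_, θ + b • d, ?_, card_lt_card ?_, card_lt_card ?_,
    mem_segment_add_smul_add_smul θ d (by linarith) hb0.le⟩
  · exact add_smul_single_sub_single_mem_fiberPolytope hθ hij hfib
      (by linarith) (by linarith) (by linarith) (by linarith)
  · exact add_smul_single_sub_single_mem_fiberPolytope hθ hij hfib
      (by linarith) (by linarith) (by linarith) (by linarith)
  · refine fractionalCoords_ssubset hi hj (fun t hti htj => hd t hti htj _) ?_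
    simp only [fractionalCoords, mem_filter_univ, hdi, hdj]
    rcases ha with h | h <;> simp [h]
  · refine fractionalCoords_ssubset hi hj (fun t hti htj => hd t hti htj _) ?_
    simp only [fractionalCoords, mem_filter_univ, hdi, hdj]
    rcases hb with h | h <;> simp [h]

theorem fiberPolytope_eq_convexHull :
    fiberPolytope f = convexHull 𝕜 (fiberPolytopeVertices (𝕜 := 𝕜) f) := by
  refine subset_antisymm ?_ (convexHull_min fiberPolytopeVertices_subset convex_fiberPolytope)
  refine subset_convexHull_of_mem_segment (fun θ => #(fractionalCoords θ)) fun θ hθ hV => ?_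
  refine exists_mem_segment_of_fractionalCoords_nonempty hθ (nonempty_iff_ne_empty.2 fun hF => ?_)
  exact hV (mem_fiberPolytopeVertices_of_fractionalCoords_eq_empty hθ hF)

end FiberPolytope

theorem fiberPolytope_eq_setOf_mem_hypersimplex {n : ℕ} {β : Type*} [DecidableEq β]
    (f : Fin n → β) :
    fiberPolytope f = {θ | θ ∈ hypersimplex n ∧ ∀ i, ∑ j with f j = f i, θ j ≤ 1} :=
  Set.ext fun _ => ⟨fun hθ => ⟨⟨fun i => ⟨hθ.1 i, le_one_of_mem_fiberPolytope hθ i⟩, hθ.2.1⟩,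
    hθ.2.2⟩, fun ⟨⟨hb, hsum⟩, hfib⟩ => ⟨fun i => (hb i).1, hsum, hfib⟩⟩

theorem mem_span_singleton_iff_span_eq {V : Type*} [AddCommGroup V] [Module k V] {x y : V}
    (hx : x ≠ 0) : x ∈ Submodule.span k {y} ↔ Submodule.span k {x} = Submodule.span k {y} := by
  refine ⟨fun h => ?_, fun h => h ▸ Submodule.mem_span_singleton_self x⟩
  obtain ⟨c, rfl⟩ := Submodule.mem_span_singleton.1 h
  have hc : c ≠ 0 := by rintro rfl; simp at hx
  exact Submodule.span_singleton_smul_eq (IsUnit.mk0 c hc) y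

theorem qnSemistable_iff_s6 {n : ℕ} {s : Fin n → Fin 2 → k} (hs : ∀ i, s i ≠ 0) {θ : Fin n → ℚ}
    (hθ : θ ∈ hypersimplex n) :
    QnSemistable θ s ↔ ∀ i, ∑ j with s j ∈ Submodule.span k {s i}, θ j ≤ 1 := by
  refine ⟨fun h i => ?_, fun hfib U W hUW => ?_⟩
  · have hblock := h {j | s j ∈ Submodule.span k {s i}} _ fun j hj => (mem_filter_univ j).1 hj
    rw [finrank_span_singleton (hs i)] at hblock
    push_cast at hblock
    linarith
  rcases U.eq_empty_or_nonempty with rfl | ⟨i, hi⟩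
  · simp
  have hiW : Submodule.span k {s i} ≤ W := (Submodule.span_singleton_le_iff_mem _ _).2 (hUW i hi)
  have hW1 : 1 ≤ Module.finrank k W :=
    (finrank_span_singleton (K := k) (hs i)).symm.le.trans (Submodule.finrank_mono hiW)
  rcases hW1.eq_or_lt with hW | hW
  · have hWi : Submodule.span k {s i} = W :=
      Submodule.eq_of_le_of_finrank_eq hiW (by rw [finrank_span_singleton (hs i), hW])
    have hU : ∑ j ∈ U, θ j ≤ ∑ j with s j ∈ Submodule.span k {s i}, θ j :=
      sum_le_sum_of_subset_of_nonneg (fun j hj => by simpa [hWi] using hUW j hj)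
        fun j _ _ => (hθ.1 j).1
    rw [← hW]
    push_cast
    linarith [hfib i]
  · have hU : ∑ j ∈ U, θ j ≤ ∑ j, θ j :=
      sum_le_sum_of_subset_of_nonneg (subset_univ U) fun j _ _ => (hθ.1 j).1
    have hW2 : (2 : ℚ) ≤ Module.finrank k W := by exact_mod_cast hW
    linarith [hθ.2]

/-- Description of the polytope `Θ(s) ⊆ Δ(2,n)` of weights for which a representation `s`
of `Q_n` with all `s_i ≠ 0` is semistable: it is cut out by the walls given by the blocks of
the linear-dependence partition, and it is the convex hull of the vertices `e_i + e_j`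
for `i, j` in different blocks. -/
theorem qn_semistability_polytope {n : ℕ} (s : Fin n → Fin 2 → k) (hs : ∀ i, s i ≠ 0) :
    {θ : Fin n → ℚ | θ ∈ hypersimplex n ∧ QnSemistable θ s}
      = {θ : Fin n → ℚ | θ ∈ hypersimplex n ∧
          ∀ i : Fin n,
            ∑ j ∈ Finset.univ.filter (fun j => s j ∈ Submodule.span k {s i}), θ j ≤ 1} ∧
    {θ : Fin n → ℚ | θ ∈ hypersimplex n ∧ QnSemistable θ s}
      = convexHull ℚ {v : Fin n → ℚ | ∃ i j : Fin n,
          s j ∉ Submodule.span k {s i} ∧ v = Pi.single i 1 + Pi.single j 1} := by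
  have hΘ : {θ : Fin n → ℚ | θ ∈ hypersimplex n ∧ QnSemistable θ s}
      = {θ | θ ∈ hypersimplex n ∧ ∀ i, ∑ j with s j ∈ Submodule.span k {s i}, θ j ≤ 1} :=
    Set.ext fun θ => and_congr_right (qnSemistable_iff_s6 hs)
  refine ⟨hΘ, hΘ.trans ?_⟩
  have hline (i j : Fin n) :
      s j ∈ Submodule.span k {s i} ↔ Submodule.span k {s j} = Submodule.span k {s i} :=
    mem_span_singleton_iff_span_eq (hs j)
  convert fiberPolytope_eq_convexHull (𝕜 := ℚ) (f := fun i => Submodule.span k {s i}) using 1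
  · rw [fiberPolytope_eq_setOf_mem_hypersimplex]
    simp_rw [hline]
  · simp_rw [hline, fiberPolytopeVertices, ne_comm]
end
end

section
/- Let k be a field and s = (s_1,…,s_n) a tuple of nonzero vectors s_i ∈ k^2, with the partition {1,…,n} = ⊔_l J_l defined by: i and j lie in the same block if and only if s_i and s_j are linearly dependent. Then there exists θ ∈ Δ(2,n) such that s is θ-stable if and only if the partition has at least 3 blocks. If the partition has exactly two blocks J and its complement J^∁, then {θ ∈ Δ(2,n) : s is θ-semistable} = {θ ∈ Δ(2,n) : ∑_{i∈J} θ_i = 1}. -/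
noncomputable section

open Finset
open scoped Classical

variable {k : Type*} [Field k]

/-! For nonzero `s i`, a subrepresentation `(U, W)` with `U ≠ ∅` either has `W = k²`, or `W` is
the line `k ∙ s i` and then `U` lies in the block of `i`. Hence, for `θ ∈ Δ(2,n)`, semistability
means `θ(J_l) ≤ 1` for every block, and stability means `θ > 0` and `θ(J_l) < 1`. The block sums
add up to `2`, so the latter forces at least three blocks; conversely, with `N ≥ 3` blocks the
weight giving every block the mass `2 / N`, spread evenly over its members, is stabilizing.
With exactly two blocks `J, Jᶜ`, the conditions `θ(J) ≤ 1` and `θ(Jᶜ) ≤ 1` say `θ(J) = 1`. -/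

open Submodule Module

theorem Finset.sum_inv_card_fiber {ι κ K : Type*} [DecidableEq κ] [DivisionSemiring K]
    [CharZero K] (s : Finset ι) (f : ι → κ) :
    ∑ x ∈ s, ((#{y ∈ s | f y = f x} : ℕ) : K)⁻¹ = #(s.image f) := by
  have hfiber : ∀ x ∈ s, ∑ y ∈ s with f y = f x, ((#{z ∈ s | f z = f y} : ℕ) : K)⁻¹ = 1 := by
    intro x hx
    rw [sum_congr rfl fun y hy => by rw [(mem_filter.1 hy).2], sum_const, nsmul_eq_mul,
      mul_inv_cancel₀ (Nat.cast_ne_zero.2 (card_ne_zero_of_mem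
      (s := {y ∈ s | f y = f x}) (mem_filter.2 ⟨hx, rfl⟩)))]
  rw [card_eq_sum_ones, Nat.cast_sum, Nat.cast_one, sum_image' _ fun x hx => (hfiber x hx).symm]

namespace Qn

variable {n : ℕ} {s : Fin n → Fin 2 → k} {θ : Fin n → ℚ} {i j : Fin n}

/-- The block `J_l` of the linear-dependence partition that contains `i`. -/
def block (s : Fin n → Fin 2 → k) (i : Fin n) : Finset (Fin n) :=
  {j | k ∙ s j = k ∙ s i}

def numBlocks (s : Fin n → Fin 2 → k) : ℕ :=
  #(univ.image fun i => k ∙ s i)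

lemma self_mem_block (s : Fin n → Fin 2 → k) (i : Fin n) : i ∈ block s i := by
  simp [block]

lemma mem_block_comm : j ∈ block s i ↔ i ∈ block s j := by
  simp [block, eq_comm]

lemma block_eq_of_mem (h : j ∈ block s i) : block s j = block s i := by
  simp only [block, mem_filter, mem_univ, true_and] at h ⊢
  rw [h]

lemma mem_block_iff (hj : s j ≠ 0) : j ∈ block s i ↔ s j ∈ k ∙ s i := by
  simp only [block, mem_filter, mem_univ, true_and]
  refine ⟨fun h => h ▸ mem_span_singleton_self _, fun h => ?_⟩
  obtain ⟨a, ha⟩ := mem_span_singleton.1 h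
  rw [← ha]
  exact span_singleton_smul_eq (isUnit_iff_ne_zero.2 (left_ne_zero_of_smul (ha ▸ hj))) _

lemma mem_span_singleton_comm (hs : ∀ i, s i ≠ 0) : s j ∈ k ∙ s i ↔ s i ∈ k ∙ s j := by
  rw [← mem_block_iff (hs j), ← mem_block_iff (hs i), mem_block_comm]

lemma block_eq_of_forall (hs : ∀ i, s i ≠ 0) {J : Finset (Fin n)}
    (hJ : ∀ j ∈ J, s j ∈ k ∙ s i) (hJc : ∀ j ∉ J, s j ∉ k ∙ s i) : block s i = J := by
  ext j
  rw [mem_block_iff (hs j)]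
  by_cases hj : j ∈ J
  · exact iff_of_true (hJ j hj) hj
  · exact iff_of_false (hJc j hj) hj

lemma three_le_numBlocks_iff (hs : ∀ i, s i ≠ 0) :
    3 ≤ numBlocks s ↔ ∃ i j l : Fin n, s j ∉ k ∙ s i ∧ s l ∉ k ∙ s i ∧ s l ∉ k ∙ s j := by
  have hne : ∀ i j, k ∙ s i ≠ k ∙ s j ↔ s j ∉ k ∙ s i := fun i j => by
    rw [← mem_block_iff (hs j), block, mem_filter, ne_comm]; simp
  simp only [numBlocks, Nat.succ_le_iff, two_lt_card, mem_image, mem_univ, true_and,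
    exists_exists_eq_and, hne]

lemma finrank_eq_one_and_subset_block_or_eq_top_of_qnIsSubrep (hs : ∀ i, s i ≠ 0)
    {U : Finset (Fin n)} {W : Submodule k (Fin 2 → k)} (hUW : QnIsSubrep s U W) (hi : i ∈ U) :
    (finrank k W = 1 ∧ U ⊆ block s i) ∨ W = ⊤ := by
  have hle : k ∙ s i ≤ W := (span_singleton_le_iff_mem _ _).2 (hUW i hi)
  have h1 : 1 ≤ finrank k W := by
    simpa [finrank_span_singleton (hs i)] using finrank_mono hle
  have h2 : finrank k W ≤ 2 := by simpa using W.finrank_le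
  rcases (by omega : finrank k W = 1 ∨ finrank k W = 2) with h | h
  · have hW : k ∙ s i = W := eq_of_le_of_finrank_eq hle (by rw [finrank_span_singleton (hs i), h])
    exact .inl ⟨h, fun j hj => (mem_block_iff (hs j)).2 (hW ▸ hUW j hj)⟩
  · exact .inr (eq_top_of_finrank_eq (by rw [h, finrank_fin_fun]))

lemma qnSemistable_iff (hs : ∀ i, s i ≠ 0) (hθ0 : ∀ i, 0 ≤ θ i) (hθ : ∑ i, θ i = 2) :
    QnSemistable θ s ↔ ∀ i, ∑ j ∈ block s i, θ j ≤ 1 := by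
  refine ⟨fun h i => ?_, fun h U W hUW => ?_⟩
  · have := h (block s i) (k ∙ s i) fun j hj => (mem_block_iff (hs j)).1 hj
    rw [finrank_span_singleton (hs i)] at this
    push_cast at this
    linarith
  rcases U.eq_empty_or_nonempty with rfl | ⟨i, hi⟩
  · simp
  rcases finrank_eq_one_and_subset_block_or_eq_top_of_qnIsSubrep hs hUW hi with ⟨hW, hU⟩ | rfl
  · have := (sum_le_sum_of_subset_of_nonneg hU fun j _ _ => hθ0 j).trans (h i)
    rw [hW]
    push_cast
    linarith
  · have := sum_le_sum_of_subset_of_nonneg (subset_univ U) fun j _ _ => hθ0 j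
    rw [finrank_top, finrank_fin_fun]
    push_cast
    linarith

lemma pos_of_qnStable (hθ : ∑ i, θ i = 2) (h : QnStable θ s) (i : Fin n) : 0 < θ i := by
  have := h.2 (univ.erase i) ⊤ (fun _ _ => mem_top) (fun h' => top_ne_bot h'.2)
    fun h' => erase_eq_self.1 h'.1 (mem_univ i)
  rw [finrank_top, finrank_fin_fun, sum_erase_eq_sub (mem_univ i), hθ] at this
  push_cast at this
  linarith

lemma qnStable_iff (hs : ∀ i, s i ≠ 0) (hθ : ∑ i, θ i = 2) :
    QnStable θ s ↔ (∀ i, 0 < θ i) ∧ ∀ i, ∑ j ∈ block s i, θ j < 1 := by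
  constructor
  · intro hst
    refine ⟨pos_of_qnStable hθ hst, fun i => ?_⟩
    have hline : k ∙ s i ≠ ⊤ := fun h' => by
      have := finrank_span_singleton (K := k) (hs i)
      rw [h', finrank_top, finrank_fin_fun] at this
      omega
    have := hst.2 (block s i) (k ∙ s i) (fun j hj => (mem_block_iff (hs j)).1 hj)
      (fun h' => ne_empty_of_mem (self_mem_block s i) h'.1) fun h' => hline h'.2
    rw [finrank_span_singleton (hs i)] at this
    push_cast at this
    linarith
  rintro ⟨hpos, h⟩
  refine ⟨(qnSemistable_iff hs (fun i => (hpos i).le) hθ).2 fun i => (h i).le,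
    fun U W hUW hbot htop => ?_⟩
  rcases U.eq_empty_or_nonempty with rfl | ⟨i, hi⟩
  · have : 0 < finrank k W := Nat.pos_of_ne_zero fun h0 => hbot ⟨rfl, finrank_eq_zero.1 h0⟩
    simp only [sum_empty, add_zero, neg_lt_zero, Nat.cast_pos]
    exact this
  rcases finrank_eq_one_and_subset_block_or_eq_top_of_qnIsSubrep hs hUW hi with ⟨hW, hU⟩ | rfl
  · have := (sum_le_sum_of_subset_of_nonneg hU fun j _ _ => (hpos j).le).trans_lt (h i)
    rw [hW]
    push_cast
    linarith
  · obtain ⟨j, hj⟩ : ∃ j, j ∉ U := by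
      by_contra! hU
      exact htop ⟨eq_univ_iff_forall.2 hU, rfl⟩
    have hUc : θ j ≤ ∑ m ∈ Uᶜ, θ m :=
      single_le_sum (fun m _ => (hpos m).le) (mem_compl.2 hj)
    have := sum_add_sum_compl U θ
    rw [finrank_top, finrank_fin_fun]
    push_cast
    linarith [hpos j]

lemma sum_lt_numBlocks (hn : n ≠ 0) (h : ∀ i, ∑ j ∈ block s i, θ j < 1) :
    ∑ i, θ i < numBlocks s := by
  rw [← sum_fiberwise_of_maps_to (t := univ.image fun i => k ∙ s i)
    fun i _ => mem_image_of_mem _ (mem_univ i), numBlocks, card_eq_sum_ones, Nat.cast_sum,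
    Nat.cast_one]
  refine sum_lt_sum_of_nonempty
    ((univ_nonempty_iff.2 ⟨⟨0, Nat.pos_of_ne_zero hn⟩⟩).image _)
    fun L hL => ?_
  obtain ⟨i, -, rfl⟩ := mem_image.1 hL
  exact h i

def blockUniformWeight (s : Fin n → Fin 2 → k) (i : Fin n) : ℚ :=
  2 / (numBlocks s * #(block s i))

lemma card_block_pos (s : Fin n → Fin 2 → k) (i : Fin n) : (0 : ℚ) < #(block s i) :=
  Nat.cast_pos.2 (card_pos.2 ⟨i, self_mem_block s i⟩)

lemma sum_block_blockUniformWeight (s : Fin n → Fin 2 → k) (i : Fin n) :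
    ∑ j ∈ block s i, blockUniformWeight s j = 2 / numBlocks s := by
  have hc := (card_block_pos s i).ne'
  rw [sum_congr rfl fun j hj => by rw [blockUniformWeight, block_eq_of_mem hj], sum_const,
    nsmul_eq_mul]
  field_simp

lemma sum_blockUniformWeight (h : numBlocks s ≠ 0) : ∑ i, blockUniformWeight s i = 2 := by
  calc ∑ i, blockUniformWeight s i = 2 / numBlocks s * ∑ i, ((#(block s i) : ℕ) : ℚ)⁻¹ := by
        simp only [blockUniformWeight, mul_sum, div_eq_mul_inv, mul_inv, mul_assoc]
    _ = 2 / numBlocks s * numBlocks s := by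
        congr 1
        exact sum_inv_card_fiber univ fun i => k ∙ s i
    _ = 2 := div_mul_cancel₀ _ (Nat.cast_ne_zero.2 h)

lemma blockUniformWeight_pos (h : numBlocks s ≠ 0) (i : Fin n) : 0 < blockUniformWeight s i :=
  div_pos two_pos (mul_pos (Nat.cast_pos.2 (Nat.pos_of_ne_zero h)) (card_block_pos s i))

lemma blockUniformWeight_le_one (h : 2 ≤ numBlocks s) (i : Fin n) :
    blockUniformWeight s i ≤ 1 := by
  have hN : (2 : ℚ) ≤ numBlocks s := by exact_mod_cast h
  have hc : (1 : ℚ) ≤ #(block s i) := by exact_mod_cast card_pos.2 ⟨i, self_mem_block s i⟩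
  rw [blockUniformWeight, div_le_one (by positivity)]
  nlinarith

lemma exists_qnStable_iff (hs : ∀ i, s i ≠ 0) :
    (∃ θ ∈ hypersimplex n, QnStable θ s) ↔ 3 ≤ numBlocks s := by
  constructor
  · rintro ⟨θ, ⟨-, hθ⟩, hst⟩
    have hn : n ≠ 0 := by
      rintro rfl
      simp at hθ
    have := sum_lt_numBlocks hn ((qnStable_iff hs hθ).1 hst).2
    rw [hθ] at this
    exact_mod_cast this
  · intro h
    have hN : (3 : ℚ) ≤ numBlocks s := by exact_mod_cast h
    have hsum := sum_blockUniformWeight (s := s) (by omega)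
    refine ⟨blockUniformWeight s, ⟨fun i => ⟨(blockUniformWeight_pos (by omega) i).le,
      blockUniformWeight_le_one (by omega) i⟩, hsum⟩,
      (qnStable_iff hs hsum).2 ⟨blockUniformWeight_pos (by omega), fun i => ?_⟩⟩
    rw [sum_block_blockUniformWeight, div_lt_one (by positivity)]
    linarith

lemma qnSemistable_iff_sum_eq_one_of_two_blocks (hs : ∀ i, s i ≠ 0) (hθ0 : ∀ i, 0 ≤ θ i)
    (hθ : ∑ i, θ i = 2) {J : Finset (Fin n)} (hi : i ∈ J) (hj : j ∉ J)
    (hJ : ∀ m ∈ J, block s m = J) (hJc : ∀ m ∉ J, block s m = Jᶜ) :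
    QnSemistable θ s ↔ ∑ m ∈ J, θ m = 1 := by
  have hsum := sum_add_sum_compl J θ
  rw [qnSemistable_iff hs hθ0 hθ]
  constructor
  · intro h
    have h1 := hJ i hi ▸ h i
    have h2 := hJc j hj ▸ h j
    linarith
  · intro h m
    by_cases hm : m ∈ J
    · rw [hJ m hm, h]
    · rw [hJc m hm]
      linarith

end Qn

open Qn in
/-- A representation `s` of `Q_n` with all `s_i ≠ 0` is stable for some weight in `Δ(2,n)`
iff the linear-dependence partition has at least 3 blocks; if there are exactly two blocks
`J` and `J^∁`, then the set of weights for which `s` is semistable is the wall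
`W_{{J,J^∁}}`. -/
theorem qn_stable_exists_iff_three_blocks {n : ℕ}
    (s : Fin n → Fin 2 → k) (hs : ∀ i, s i ≠ 0) :
    ((∃ θ : Fin n → ℚ, θ ∈ hypersimplex n ∧ QnStable θ s) ↔
      ∃ i j l : Fin n, s j ∉ Submodule.span k {s i} ∧ s l ∉ Submodule.span k {s i} ∧
        s l ∉ Submodule.span k {s j}) ∧
    (∀ J : Finset (Fin n), J ≠ ∅ → J ≠ Finset.univ →
      (∀ i ∈ J, ∀ j ∈ J, s j ∈ Submodule.span k {s i}) →
      (∀ i ∈ Jᶜ, ∀ j ∈ Jᶜ, s j ∈ Submodule.span k {s i}) →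
      (∀ i ∈ J, ∀ j ∈ Jᶜ, s j ∉ Submodule.span k {s i}) →
      {θ : Fin n → ℚ | θ ∈ hypersimplex n ∧ QnSemistable θ s}
        = {θ : Fin n → ℚ | θ ∈ hypersimplex n ∧ ∑ i ∈ J, θ i = 1}) := by
  refine ⟨(exists_qnStable_iff hs).trans (three_le_numBlocks_iff hs),
    fun J hJ hJu hJJ hJcJc hJJc => ?_⟩
  obtain ⟨i, hi⟩ := nonempty_iff_ne_empty.2 hJ
  obtain ⟨j, hj⟩ : ∃ j, j ∉ J := by
    by_contra! h
    exact hJu (eq_univ_iff_forall.2 h)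
  have hblockJ : ∀ m ∈ J, block s m = J := fun m hm =>
    block_eq_of_forall hs (hJJ m hm) fun x hx => hJJc m hm x (mem_compl.2 hx)
  have hblockJc : ∀ m ∉ J, block s m = Jᶜ := fun m hm =>
    block_eq_of_forall hs (hJcJc m (mem_compl.2 hm)) fun x hx => by
      rw [mem_span_singleton_comm hs]
      exact hJJc x (by simpa using hx) m (mem_compl.2 hm)
  ext θ
  exact and_congr_right fun hθ => qnSemistable_iff_sum_eq_one_of_two_blocks hs
    (fun m => (hθ.1 m).1) hθ.2 hi hj hblockJ hblockJc
end
end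

section
/- Let n ≥ 2 and J ⊆ {1,…,n} with ∅ ≠ J ≠ {1,…,n}. Then {θ ∈ Δ(2,n) : ∑_{i∈J} θ_i = 1} = conv{ e_i + e_j : i ∈ J, j ∉ J }. -/
/-!
A point `θ` of the wall splits as `θ|_J + θ|_{Jᶜ}`. Both pieces are nonnegative with coordinate
sum `1`, so they are convex combinations of the unit vectors `e_i`, `i ∈ J`, resp. `e_j`,
`j ∉ J`; since `conv A + conv B = conv (A + B)`, `θ` lies in the convex hull of the
`e_i + e_j`. Conversely the wall is an intersection of a box with two hyperplanes, hence
convex, and it contains every `e_i + e_j`.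
-/

open Finset
open scoped Pointwise

variable {𝕜 ι : Type*} [Field 𝕜] [LinearOrder 𝕜] [IsStrictOrderedRing 𝕜]

variable (𝕜) in
def hypersimplexWall [Fintype ι] (J : Finset ι) : Set (ι → 𝕜) :=
  {θ | ((∀ i, 0 ≤ θ i ∧ θ i ≤ 1) ∧ ∑ i, θ i = 2) ∧ ∑ i ∈ J, θ i = 1}

theorem convex_setOf_sum_eq (s : Finset ι) (c : 𝕜) :
    Convex 𝕜 {θ : ι → 𝕜 | ∑ i ∈ s, θ i = c} :=
  convex_hyperplane ⟨fun _ _ => sum_add_distrib, fun a θ => (mul_sum s θ a).symm⟩ c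

theorem convex_hypersimplexWall [Fintype ι] (J : Finset ι) :
    Convex 𝕜 (hypersimplexWall 𝕜 J) := by
  have h : hypersimplexWall 𝕜 J =
      Set.Icc 0 1 ∩ {θ | ∑ i ∈ univ, θ i = 2} ∩ {θ | ∑ i ∈ J, θ i = 1} := by
    ext θ
    simp [hypersimplexWall, Pi.le_def, forall_and]
  rw [h]
  exact ((convex_Icc 0 1).inter (convex_setOf_sum_eq _ _)).inter (convex_setOf_sum_eq _ _)

theorem single_add_single_mem_hypersimplexWall [Fintype ι] [DecidableEq ι] {J : Finset ι}
    {i j : ι} (hi : i ∈ J) (hj : j ∉ J) :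
    Pi.single i 1 + Pi.single j 1 ∈ hypersimplexWall 𝕜 J := by
  have hij : i ≠ j := ne_of_mem_of_not_mem hi hj
  refine ⟨⟨fun k => ?_, ?_⟩, ?_⟩
  · by_cases hki : k = i <;> by_cases hkj : k = j <;> simp_all
  · simp [sum_add_distrib, one_add_one_eq_two]
  · simp [sum_add_distrib, Pi.single_apply, hi, hj]

theorem sum_single_mem_convexHull [DecidableEq ι] {s : Finset ι} {w : ι → 𝕜}
    (h0 : ∀ i ∈ s, 0 ≤ w i) (h1 : ∑ i ∈ s, w i = 1) :
    ∑ i ∈ s, Pi.single i (w i) ∈ convexHull 𝕜 ((fun i => Pi.single i (1 : 𝕜)) '' s) := by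
  have h : ∀ i, Pi.single i (w i) = w i • Pi.single i (1 : 𝕜) := fun i => by
    rw [← Pi.single_smul', smul_eq_mul, mul_one]
  simp_rw [h]
  exact (convex_convexHull 𝕜 _).sum_mem h0 h1 fun i hi =>
    subset_convexHull 𝕜 _ (Set.mem_image_of_mem _ hi)

theorem image_single_add_image_single_compl [Fintype ι] [DecidableEq ι] {M : Type*}
    [AddZeroClass M] (a : M) (J : Finset ι) :
    (fun i => Pi.single i a) '' (J : Set ι) + (fun j => Pi.single j a) '' ↑(Jᶜ : Finset ι) =
      {v | ∃ i ∈ J, ∃ j ∉ J, v = Pi.single i a + Pi.single j a} := by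
  ext v
  simp [Set.mem_add, eq_comm]

theorem hypersimplexWall_subset_convexHull [Fintype ι] [DecidableEq ι] (J : Finset ι) :
    hypersimplexWall 𝕜 J ⊆ convexHull 𝕜
      ((fun i => Pi.single i (1 : 𝕜)) '' (J : Set ι) +
        (fun j => Pi.single j (1 : 𝕜)) '' ↑(Jᶜ : Finset ι)) := by
  rintro θ ⟨⟨hbound, hsum⟩, hJ⟩
  have hJc : ∑ i ∈ Jᶜ, θ i = 1 := by linarith [sum_add_sum_compl J θ]
  rw [convexHull_add, ← univ_sum_single θ, ← sum_add_sum_compl J]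
  exact Set.add_mem_add (sum_single_mem_convexHull (fun i _ => (hbound i).1) hJ)
    (sum_single_mem_convexHull (fun i _ => (hbound i).1) hJc)

theorem wall_eq_convexHull_general {n : ℕ} (J : Finset (Fin n)) :
    {θ : Fin n → ℚ | ((∀ i, 0 ≤ θ i ∧ θ i ≤ 1) ∧ ∑ i, θ i = 2) ∧ ∑ i ∈ J, θ i = 1}
      = convexHull ℚ {v : Fin n → ℚ | ∃ i ∈ J, ∃ j ∉ J,
          v = Pi.single i 1 + Pi.single j 1} := by
  change hypersimplexWall ℚ J = _
  refine subset_antisymm ?_ (convexHull_min ?_ (convex_hypersimplexWall J))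
  · rw [← image_single_add_image_single_compl]
    exact hypersimplexWall_subset_convexHull J
  · rintro v ⟨i, hi, j, hj, rfl⟩
    exact single_add_single_mem_hypersimplexWall hi hj

/-- The wall `W_{{J,J^∁}} = {θ ∈ Δ(2,n) : ∑_{i∈J} θ_i = 1}` of the hypersimplex is the
convex hull of the points `e_i + e_j` with `i ∈ J`, `j ∉ J`. -/
theorem wall_eq_convexHull {n : ℕ} (hn : 2 ≤ n) (J : Finset (Fin n))
    (hJ : J ≠ ∅) (hJ' : J ≠ Finset.univ) :
    {θ : Fin n → ℚ | ((∀ i, 0 ≤ θ i ∧ θ i ≤ 1) ∧ ∑ i, θ i = 2) ∧ ∑ i ∈ J, θ i = 1}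
      = convexHull ℚ {v : Fin n → ℚ | ∃ i ∈ J, ∃ j ∉ J,
          v = Pi.single i 1 + Pi.single j 1} :=
  wall_eq_convexHull_general J
end

section
/- Let n ≥ 4 and let J_1, J_2 ⊆ {1,…,n} satisfy 2 ≤ |J_m| ≤ n−2 for m = 1,2 and J_2 ∉ {J_1, {1,…,n}∖J_1}. Then there exists θ ∈ ℚ^n with ∑_i θ_i = 2, 0 < θ_i < 1 for all i, ∑_{i∈J_1} θ_i = 1 and ∑_{i∈J_2} θ_i = 1, if and only if none of the following four conditions holds: J_1 ⊆ J_2, J_2 ⊆ J_1, J_1 ∩ J_2 = ∅, J_1 ∪ J_2 = {1,…,n}. (Equivalently: two distinct inner walls of Δ(2,n) intersect the interior of Δ(2,n) if and only if there is no inclusion between the sets J_1, J_1^∁ and J_2, J_2^∁.) -/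
/-!
For positive `θ` the sum `∑ i ∈ J, θ i` strictly increases along strict inclusions, and when the
total is `2` and `∑ i ∈ J₁, θ i = 1` the complement `J₁ᶜ` also has sum `1`. So any inclusion among
`J₁`, `J₁ᶜ` and `J₂` forces an equality. Conversely, if there is no inclusion, the four cells
`J₁ ∩ J₂`, `J₁ \ J₂`, `J₂ \ J₁`, `(J₁ ∪ J₂)ᶜ` are nonempty, and spreading mass `1/2` uniformly
over each cell gives an interior point on both walls.
-/

open Finset

section Nested

variable {ι M : Type*}

theorem Finset.eq_of_subset_of_sum_eq [AddCommMonoid M] [PartialOrder M]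
    [IsOrderedCancelAddMonoid M] {f : ι → M} {s t : Finset ι} (hf : ∀ i ∈ t, 0 < f i)
    (hst : s ⊆ t) (h : ∑ i ∈ s, f i = ∑ i ∈ t, f i) : s = t := by
  by_contra hne
  obtain ⟨i, hit, his⟩ := not_subset.1 fun hts ↦ hne (hst.antisymm hts)
  exact (sum_lt_sum_of_subset hst hit his (hf i hit) fun j hj _ ↦ (hf j hj).le).ne h

theorem eq_or_eq_compl_of_nested [Fintype ι] [DecidableEq ι] [AddCommGroup M] [PartialOrder M]
    [IsOrderedAddMonoid M] {θ : ι → M} (hθ : ∀ i, 0 < θ i) {c : M} {J₁ J₂ : Finset ι}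
    (htot : ∑ i, θ i = c + c) (h₁ : ∑ i ∈ J₁, θ i = c) (h₂ : ∑ i ∈ J₂, θ i = c)
    (hnested : J₁ ⊆ J₂ ∨ J₂ ⊆ J₁ ∨ J₁ ∩ J₂ = ∅ ∨ J₁ ∪ J₂ = univ) :
    J₂ = J₁ ∨ J₂ = J₁ᶜ := by
  have hcompl : ∑ i ∈ J₁ᶜ, θ i = c :=
    add_left_cancel (by rw [← h₁, sum_add_sum_compl, htot, h₁])
  have eq_of_subset {s t : Finset ι} (hs : ∑ i ∈ s, θ i = c) (ht : ∑ i ∈ t, θ i = c)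
      (hst : s ⊆ t) : s = t :=
    eq_of_subset_of_sum_eq (fun i _ ↦ hθ i) hst (hs.trans ht.symm)
  rcases hnested with h | h | h | h
  · exact .inl (eq_of_subset h₁ h₂ h).symm
  · exact .inl (eq_of_subset h₂ h₁ h)
  · exact .inr (eq_of_subset h₂ hcompl
      (subset_compl_iff_disjoint_left.2 (disjoint_iff_inter_eq_empty.2 h)))
  · refine .inr (eq_of_subset hcompl h₂ fun i hi ↦ ?_).symm
    exact (mem_union.1 (h ▸ mem_univ i)).resolve_left (mem_compl.1 hi)

end Nested

section FiberwiseUniform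

variable {ι κ K : Type*} [Fintype ι] [DecidableEq κ] [Field K] [LinearOrder K]
  [IsStrictOrderedRing K]

def fiberwiseUniform (g : ι → κ) (c : K) (i : ι) : K :=
  c / #{j | g j = g i}

theorem one_le_card_fiber (g : ι → κ) (i : ι) : (1 : K) ≤ #{j | g j = g i} :=
  Nat.one_le_cast.2 (card_pos.2 ⟨i, by simp⟩)

theorem fiberwiseUniform_pos (g : ι → κ) {c : K} (hc : 0 < c) (i : ι) :
    0 < fiberwiseUniform g c i :=
  div_pos hc (zero_lt_one.trans_le (one_le_card_fiber g i))

theorem fiberwiseUniform_le (g : ι → κ) {c : K} (hc : 0 ≤ c) (i : ι) :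
    fiberwiseUniform g c i ≤ c :=
  div_le_self hc (one_le_card_fiber g i)

theorem sum_fiberwiseUniform {g : ι → κ} (hg : Function.Surjective g) (c : K)
    {s : Finset ι} {T : Finset κ} (hs : ∀ i, i ∈ s ↔ g i ∈ T) :
    ∑ i ∈ s, fiberwiseUniform g c i = #T • c := by
  have hsT : s = ({i | g i ∈ T} : Finset ι) := by ext i; simp [hs]
  have hfiber (k : κ) : ∑ i with g i = k, fiberwiseUniform g c i = c := by
    obtain ⟨i₀, rfl⟩ := hg k
    have hcard : (#{j | g j = g i₀} : K) ≠ 0 :=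
      (zero_lt_one.trans_le (one_le_card_fiber g i₀)).ne'
    rw [sum_congr rfl fun i hi ↦ by rw [fiberwiseUniform, (mem_filter.1 hi).2], sum_const,
      nsmul_eq_mul, mul_div_cancel₀ _ hcard]
  rw [hsT, ← sum_fiberwise_eq_sum_filter, sum_congr rfl fun k _ ↦ hfiber k, sum_const]

end FiberwiseUniform

theorem surjective_decide_mem_of_not_nested {ι : Type*} [Fintype ι] [DecidableEq ι]
    {J₁ J₂ : Finset ι} (h : ¬(J₁ ⊆ J₂ ∨ J₂ ⊆ J₁ ∨ J₁ ∩ J₂ = ∅ ∨ J₁ ∪ J₂ = univ)) :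
    Function.Surjective fun i ↦ (decide (i ∈ J₁), decide (i ∈ J₂)) := by
  simp only [not_or] at h
  obtain ⟨h₁₂, h₂₁, hinter, hunion⟩ := h
  rintro ⟨_ | _, _ | _⟩
  · obtain ⟨i, hi⟩ : ∃ i, i ∉ J₁ ∪ J₂ := by simpa [eq_univ_iff_forall] using hunion
    exact ⟨i, by simp_all⟩
  · obtain ⟨i, hi₂, hi₁⟩ := not_subset.1 h₂₁
    exact ⟨i, by simp [hi₁, hi₂]⟩
  · obtain ⟨i, hi₁, hi₂⟩ := not_subset.1 h₁₂
    exact ⟨i, by simp [hi₁, hi₂]⟩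
  · obtain ⟨i, hi⟩ := nonempty_iff_ne_empty.2 hinter
    exact ⟨i, by simp_all⟩

theorem inner_walls_intersect_interior_iff_general {n : ℕ}
    (J1 J2 : Finset (Fin n))
    (hne : J2 ≠ J1) (hne' : J2 ≠ J1ᶜ) :
    (∃ θ : Fin n → ℚ, ∑ i, θ i = 2 ∧ (∀ i, 0 < θ i ∧ θ i < 1) ∧
      ∑ i ∈ J1, θ i = 1 ∧ ∑ i ∈ J2, θ i = 1) ↔
    ¬(J1 ⊆ J2 ∨ J2 ⊆ J1 ∨ J1 ∩ J2 = ∅ ∨ J1 ∪ J2 = Finset.univ) := by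
  constructor
  · rintro ⟨θ, htot, hθ, h₁, h₂⟩ hnested
    rcases eq_or_eq_compl_of_nested (fun i ↦ (hθ i).1) (by rw [htot]; norm_num) h₁ h₂ hnested
      with h | h
    exacts [hne h, hne' h]
  · intro hnested
    have hg := surjective_decide_mem_of_not_nested hnested
    set θ := fiberwiseUniform (fun i ↦ (decide (i ∈ J1), decide (i ∈ J2))) (1 / 2 : ℚ)
    have hθ (i : Fin n) : 0 < θ i ∧ θ i < 1 :=
      ⟨fiberwiseUniform_pos _ (by norm_num) i,
        (fiberwiseUniform_le _ (by norm_num) i).trans_lt (by norm_num)⟩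
    refine ⟨θ, ?_, hθ, ?_, ?_⟩
    · rw [sum_fiberwiseUniform hg _ (T := univ) (by simp)]
      norm_num
    · rw [sum_fiberwiseUniform hg _ (T := {(true, true), (true, false)})
        (by simp [← and_or_left, em])]
      norm_num
    · rw [sum_fiberwiseUniform hg _ (T := {(true, true), (false, true)})
        (by simp [← or_and_right, em])]
      norm_num

/-- Two distinct inner walls `W_{{J₁,J₁^∁}}`, `W_{{J₂,J₂^∁}}` of the hypersimplex `Δ(2,n)`
intersect in the interior of `Δ(2,n)` if and only if there is no inclusion between the sets
`J₁, J₁^∁` and `J₂, J₂^∁`. -/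
theorem inner_walls_intersect_interior_iff {n : ℕ} (hn : 4 ≤ n)
    (J1 J2 : Finset (Fin n))
    (h1 : 2 ≤ J1.card) (h1' : J1.card ≤ n - 2)
    (h2 : 2 ≤ J2.card) (h2' : J2.card ≤ n - 2)
    (hne : J2 ≠ J1) (hne' : J2 ≠ J1ᶜ) :
    (∃ θ : Fin n → ℚ, ∑ i, θ i = 2 ∧ (∀ i, 0 < θ i ∧ θ i < 1) ∧
      ∑ i ∈ J1, θ i = 1 ∧ ∑ i ∈ J2, θ i = 1) ↔
    ¬(J1 ⊆ J2 ∨ J2 ⊆ J1 ∨ J1 ∩ J2 = ∅ ∨ J1 ∪ J2 = Finset.univ) :=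
  inner_walls_intersect_interior_iff_general J1 J2 hne hne'
end

section
/- Let k be a field, n ≥ 1, and (η_1,η_2,θ) ∈ ℚ × ℚ × ℚ^n a weight with η_1 + η_2 + ∑_i θ_i = 0 and θ_i ≥ 0 for all i, and let s = (s_1,…,s_n) with s_i = (a_i,b_i) ∈ k × k. Then: (a) s is (η_1,η_2,θ)-semistable if and only if θ_i = 0 for every i with (a_i,b_i) = (0,0), ∑_{i : b_i = 0} θ_i ≤ −η_1, and ∑_{i : a_i = 0} θ_i ≤ −η_2; (b) s is (η_1,η_2,θ)-stable if and only if (a_i,b_i) ≠ (0,0) and θ_i > 0 for all i, ∑_{i : b_i = 0} θ_i < −η_1, and ∑_{i : a_i = 0} θ_i < −η_2. -/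
noncomputable section

open Finset
open scoped Classical

variable {k : Type*} [Field k]

/-- A triple `(U, W₁, W₂)` is a subrepresentation of the representation `s` of the quiver
`P_n` (with dimension vector `(1,…,1)`) if `(s i).1 ∈ W₁` and `(s i).2 ∈ W₂` for `i ∈ U`. -/
def PnIsSubrep {ι : Type*} (s : ι → k × k) (U : Finset ι)
    (W1 W2 : Submodule k k) : Prop :=
  ∀ i ∈ U, (s i).1 ∈ W1 ∧ (s i).2 ∈ W2

/-- `s` is `(η₁,η₂,θ)`-semistable:
`η₁·dim W₁ + η₂·dim W₂ + ∑_{i∈U} θ_i ≤ 0` for every subrepresentation. -/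
def PnSemistable {ι : Type*} [Fintype ι] (η1 η2 : ℚ) (θ : ι → ℚ) (s : ι → k × k) : Prop :=
  ∀ (U : Finset ι) (W1 W2 : Submodule k k), PnIsSubrep s U W1 W2 →
    η1 * (Module.finrank k W1 : ℚ) + η2 * (Module.finrank k W2 : ℚ) + ∑ i ∈ U, θ i ≤ 0

/-- `s` is `(η₁,η₂,θ)`-stable: semistable, and the weight is `< 0` for every
subrepresentation other than `(∅,0,0)` and `({1,…,n},k,k)`. -/
def PnStable {ι : Type*} [Fintype ι] (η1 η2 : ℚ) (θ : ι → ℚ) (s : ι → k × k) : Prop :=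
  PnSemistable η1 η2 θ s ∧
  ∀ (U : Finset ι) (W1 W2 : Submodule k k), PnIsSubrep s U W1 W2 →
    ¬(U = ∅ ∧ W1 = ⊥ ∧ W2 = ⊥) → ¬(U = Finset.univ ∧ W1 = ⊤ ∧ W2 = ⊤) →
    η1 * (Module.finrank k W1 : ℚ) + η2 * (Module.finrank k W2 : ℚ) + ∑ i ∈ U, θ i < 0

/-!
Every subspace of `k` is `0` or `k`, so a subrepresentation is a choice of `(W₁, W₂)` together
with a set `U` of indices `i` with `aᵢ ∈ W₁` and `bᵢ ∈ W₂`. As `θ ≥ 0`, for fixed `(W₁, W₂)` the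
weight is largest for the largest such `U`, so semistability amounts to four inequalities, one for
each of `(0,0)`, `(k,0)`, `(0,k)`, `(k,k)`; the one for `(k,k)` holds by `η₁ + η₂ + ∑ θᵢ = 0`.
Stability makes them strict away from the two trivial subrepresentations: `(0,0)` then rules out
`sᵢ = 0`, and `(k,k)` with `U` missing only `i` forces `θᵢ > 0`.
-/

section

variable {ι : Type*}

def pnWeight (η1 η2 : ℚ) (θ : ι → ℚ) (U : Finset ι) (W1 W2 : Submodule k k) : ℚ :=
  η1 * (Module.finrank k W1 : ℚ) + η2 * (Module.finrank k W2 : ℚ) + ∑ i ∈ U, θ i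

theorem Submodule.forall_self_iff {P : Submodule k k → Prop} : (∀ W, P W) ↔ P ⊥ ∧ P ⊤ :=
  ⟨fun h => ⟨h ⊥, h ⊤⟩, fun h W => (Ideal.eq_bot_or_top W).elim (· ▸ h.1) (· ▸ h.2)⟩

variable {η1 η2 : ℚ} {θ : ι → ℚ}

@[simp]
theorem pnWeight_bot_bot (U : Finset ι) :
    pnWeight η1 η2 θ U (⊥ : Submodule k k) ⊥ = ∑ i ∈ U, θ i := by
  simp [pnWeight]

@[simp]
theorem pnWeight_top_bot (U : Finset ι) :
    pnWeight η1 η2 θ U (⊤ : Submodule k k) ⊥ = η1 + ∑ i ∈ U, θ i := by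
  simp [pnWeight]

@[simp]
theorem pnWeight_bot_top (U : Finset ι) :
    pnWeight η1 η2 θ U (⊥ : Submodule k k) ⊤ = η2 + ∑ i ∈ U, θ i := by
  simp [pnWeight]

@[simp]
theorem pnWeight_top_top (U : Finset ι) :
    pnWeight η1 η2 θ U (⊤ : Submodule k k) ⊤ = η1 + η2 + ∑ i ∈ U, θ i := by
  simp [pnWeight]

theorem pnWeight_mono (hθ : ∀ i, 0 ≤ θ i) {U V : Finset ι} (h : U ⊆ V) (W1 W2 : Submodule k k) :
    pnWeight η1 η2 θ U W1 W2 ≤ pnWeight η1 η2 θ V W1 W2 := by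
  have := sum_le_sum_of_subset_of_nonneg h fun i _ _ => hθ i
  simp only [pnWeight]
  linarith

theorem pnWeight_lt_of_ssubset (hθ : ∀ i, 0 < θ i) {U V : Finset ι} (h : U ⊂ V)
    (W1 W2 : Submodule k k) : pnWeight η1 η2 θ U W1 W2 < pnWeight η1 η2 θ V W1 W2 := by
  obtain ⟨j, hjV, hjU⟩ := exists_of_ssubset h
  have := sum_lt_sum_of_subset h.subset hjV hjU (hθ j) fun i _ _ => (hθ i).le
  simp only [pnWeight]
  linarith

variable [Fintype ι] {s : ι → k × k}

def pnMaxSubrep (s : ι → k × k) (W1 W2 : Submodule k k) : Finset ι :=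
  univ.filter fun i => (s i).1 ∈ W1 ∧ (s i).2 ∈ W2

@[simp]
theorem pnMaxSubrep_bot_bot :
    pnMaxSubrep s (⊥ : Submodule k k) ⊥ = univ.filter fun i => s i = 0 := by
  ext i
  simp only [pnMaxSubrep, mem_filter, mem_univ, true_and, Submodule.mem_bot, Prod.ext_iff,
    Prod.fst_zero, Prod.snd_zero]

@[simp]
theorem pnMaxSubrep_top_bot :
    pnMaxSubrep s (⊤ : Submodule k k) ⊥ = univ.filter fun i => (s i).2 = 0 := by
  ext i
  simp only [pnMaxSubrep, mem_filter, mem_univ, true_and, Submodule.mem_bot, Submodule.mem_top]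

@[simp]
theorem pnMaxSubrep_bot_top :
    pnMaxSubrep s (⊥ : Submodule k k) ⊤ = univ.filter fun i => (s i).1 = 0 := by
  ext i
  simp only [pnMaxSubrep, mem_filter, mem_univ, true_and, Submodule.mem_bot, Submodule.mem_top,
    and_true]

@[simp]
theorem pnMaxSubrep_top_top : pnMaxSubrep s (⊤ : Submodule k k) ⊤ = univ := by
  ext i
  simp only [pnMaxSubrep, mem_filter, mem_univ, true_and, Submodule.mem_top]

theorem pnIsSubrep_iff_subset_pnMaxSubrep {U : Finset ι} {W1 W2 : Submodule k k} :
    PnIsSubrep s U W1 W2 ↔ U ⊆ pnMaxSubrep s W1 W2 := by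
  simp [PnIsSubrep, pnMaxSubrep, subset_iff]

theorem pnSemistable_iff_forall_pnWeight_pnMaxSubrep_nonpos (hθ : ∀ i, 0 ≤ θ i) :
    PnSemistable η1 η2 θ s ↔ ∀ W1 W2, pnWeight η1 η2 θ (pnMaxSubrep s W1 W2) W1 W2 ≤ 0 := by
  simp only [PnSemistable, pnIsSubrep_iff_subset_pnMaxSubrep]
  exact ⟨fun h W1 W2 => h _ W1 W2 subset_rfl,
    fun h U W1 W2 hU => (pnWeight_mono hθ hU W1 W2).trans (h W1 W2)⟩

theorem pnStable_iff_pnSemistable_and_pnWeight_neg :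
    PnStable η1 η2 θ s ↔ PnSemistable η1 η2 θ s ∧
      ∀ (U : Finset ι) (W1 W2 : Submodule k k), U ⊆ pnMaxSubrep s W1 W2 →
        ¬(U = ∅ ∧ W1 = ⊥ ∧ W2 = ⊥) → ¬(U = univ ∧ W1 = ⊤ ∧ W2 = ⊤) →
        pnWeight η1 η2 θ U W1 W2 < 0 := by
  simp only [PnStable, pnIsSubrep_iff_subset_pnMaxSubrep, pnWeight]

theorem pnSemistable_iff (hθ : ∀ i, 0 ≤ θ i) :
    PnSemistable η1 η2 θ s ↔
      (∀ i, s i = 0 → θ i = 0) ∧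
        ∑ i ∈ univ.filter (fun i => (s i).2 = 0), θ i ≤ -η1 ∧
        ∑ i ∈ univ.filter (fun i => (s i).1 = 0), θ i ≤ -η2 ∧
        η1 + η2 + ∑ i, θ i ≤ 0 := by
  have hzero : ∑ i ∈ univ.filter (fun i => s i = 0), θ i ≤ 0 ↔ ∀ i, s i = 0 → θ i = 0 := by
    rw [(sum_nonneg fun i _ => hθ i).ge_iff_eq', sum_eq_zero_iff_of_nonneg fun i _ => hθ i]
    simp
  simp only [pnSemistable_iff_forall_pnWeight_pnMaxSubrep_nonpos hθ, Submodule.forall_self_iff,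
    pnMaxSubrep_bot_bot, pnMaxSubrep_top_bot, pnMaxSubrep_bot_top, pnMaxSubrep_top_top,
    pnWeight_bot_bot, pnWeight_top_bot, pnWeight_bot_top, pnWeight_top_top, hzero]
  constructor
  · rintro ⟨⟨h0, hA⟩, hB, hall⟩
    exact ⟨h0, by linarith, by linarith, hall⟩
  · rintro ⟨h0, hB, hA, hall⟩
    exact ⟨⟨h0, by linarith⟩, by linarith, hall⟩

theorem PnStable.ne_zero (hθ : ∀ i, 0 ≤ θ i) (h : PnStable η1 η2 θ s) (i : ι) : s i ≠ 0 := by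
  intro hi
  have hneg := (pnStable_iff_pnSemistable_and_pnWeight_neg.1 h).2 {i} ⊥ ⊥
    (by rw [pnMaxSubrep_bot_bot]; simp [hi]) (fun h' => singleton_ne_empty i h'.1)
    (fun h' => bot_ne_top h'.2.1)
  rw [pnWeight_bot_bot, sum_singleton] at hneg
  linarith [hθ i]

theorem PnStable.pos (hsum : η1 + η2 + ∑ i, θ i = 0) (h : PnStable η1 η2 θ s) (i : ι) :
    0 < θ i := by
  have hneg := (pnStable_iff_pnSemistable_and_pnWeight_neg.1 h).2 (univ.erase i) ⊤ ⊤
    (by rw [pnMaxSubrep_top_top]; exact subset_univ _) (fun h' => bot_ne_top h'.2.1.symm)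
    (fun h' => notMem_erase i univ (by rw [h'.1]; exact mem_univ i))
  rw [pnWeight_top_top] at hneg
  linarith [sum_erase_add univ θ (mem_univ i)]

theorem PnStable.sum_filter_snd_eq_zero_lt (h : PnStable η1 η2 θ s) :
    ∑ i ∈ univ.filter (fun i => (s i).2 = 0), θ i < -η1 := by
  have hneg := (pnStable_iff_pnSemistable_and_pnWeight_neg.1 h).2 _ ⊤ ⊥ subset_rfl
    (fun h' => bot_ne_top h'.2.1.symm) (fun h' => bot_ne_top h'.2.2)
  rw [pnWeight_top_bot, pnMaxSubrep_top_bot] at hneg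
  linarith

theorem PnStable.sum_filter_fst_eq_zero_lt (h : PnStable η1 η2 θ s) :
    ∑ i ∈ univ.filter (fun i => (s i).1 = 0), θ i < -η2 := by
  have hneg := (pnStable_iff_pnSemistable_and_pnWeight_neg.1 h).2 _ ⊥ ⊤ subset_rfl
    (fun h' => bot_ne_top h'.2.2.symm) (fun h' => bot_ne_top h'.2.1)
  rw [pnWeight_bot_top, pnMaxSubrep_bot_top] at hneg
  linarith

theorem pnStable_of_forall_ne_zero_and_pos (hθ : ∀ i, 0 ≤ θ i) (hsum : η1 + η2 + ∑ i, θ i = 0)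
    (h : ∀ i, s i ≠ 0 ∧ 0 < θ i) (hB : ∑ i ∈ univ.filter (fun i => (s i).2 = 0), θ i < -η1)
    (hA : ∑ i ∈ univ.filter (fun i => (s i).1 = 0), θ i < -η2) : PnStable η1 η2 θ s := by
  refine pnStable_iff_pnSemistable_and_pnWeight_neg.2
    ⟨(pnSemistable_iff hθ).2 ⟨fun i hi => absurd hi (h i).1, hB.le, hA.le, hsum.le⟩, ?_⟩
  intro U W1 W2 hU hne1 hne2
  rcases Ideal.eq_bot_or_top W1 with rfl | rfl <;> rcases Ideal.eq_bot_or_top W2 with rfl | rfl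
  · rw [pnMaxSubrep_bot_bot, filter_false_of_mem fun i _ => (h i).1, subset_empty] at hU
    exact absurd ⟨hU, rfl, rfl⟩ hne1
  · calc pnWeight η1 η2 θ U ⊥ ⊤ ≤ pnWeight η1 η2 θ (pnMaxSubrep s ⊥ ⊤) ⊥ ⊤ :=
          pnWeight_mono hθ hU _ _
      _ < 0 := by rw [pnWeight_bot_top, pnMaxSubrep_bot_top]; linarith
  · calc pnWeight η1 η2 θ U ⊤ ⊥ ≤ pnWeight η1 η2 θ (pnMaxSubrep s ⊤ ⊥) ⊤ ⊥ :=
          pnWeight_mono hθ hU _ _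
      _ < 0 := by rw [pnWeight_top_bot, pnMaxSubrep_top_bot]; linarith
  · have hU : U ⊂ univ := ssubset_univ_iff.2 fun hU => hne2 ⟨hU, rfl, rfl⟩
    calc pnWeight η1 η2 θ U ⊤ ⊤ < pnWeight η1 η2 θ univ ⊤ ⊤ :=
          pnWeight_lt_of_ssubset (fun i => (h i).2) hU _ _
      _ = 0 := by rw [pnWeight_top_top, hsum]

theorem pnStable_iff (hθ : ∀ i, 0 ≤ θ i) (hsum : η1 + η2 + ∑ i, θ i = 0) :
    PnStable η1 η2 θ s ↔
      (∀ i, s i ≠ 0 ∧ 0 < θ i) ∧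
        ∑ i ∈ univ.filter (fun i => (s i).2 = 0), θ i < -η1 ∧
        ∑ i ∈ univ.filter (fun i => (s i).1 = 0), θ i < -η2 :=
  ⟨fun h => ⟨fun i => ⟨h.ne_zero hθ i, h.pos hsum i⟩, h.sum_filter_snd_eq_zero_lt,
      h.sum_filter_fst_eq_zero_lt⟩,
    fun ⟨h, hB, hA⟩ => pnStable_of_forall_ne_zero_and_pos hθ hsum h hB hA⟩

end

theorem pn_semistable_stable_criterion_general {n : ℕ}
    (η1 η2 : ℚ) (θ : Fin n → ℚ) (hθ : ∀ i, 0 ≤ θ i)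
    (hsum : η1 + η2 + ∑ i, θ i = 0) (s : Fin n → k × k) :
    (PnSemistable η1 η2 θ s ↔
      ((∀ i, s i = 0 → θ i = 0) ∧
        ∑ i ∈ Finset.univ.filter (fun i => (s i).2 = 0), θ i ≤ -η1 ∧
        ∑ i ∈ Finset.univ.filter (fun i => (s i).1 = 0), θ i ≤ -η2)) ∧
    (PnStable η1 η2 θ s ↔
      ((∀ i, s i ≠ 0 ∧ 0 < θ i) ∧
        ∑ i ∈ Finset.univ.filter (fun i => (s i).2 = 0), θ i < -η1 ∧
        ∑ i ∈ Finset.univ.filter (fun i => (s i).1 = 0), θ i < -η2)) := by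
  refine ⟨?_, pnStable_iff hθ hsum⟩
  rw [pnSemistable_iff hθ, hsum]
  simp only [le_refl, and_true]

/-- Characterisation of `(η₁,η₂,θ)`-(semi)stability of representations of `P_n`. -/
theorem pn_semistable_stable_criterion {n : ℕ} (hn : 1 ≤ n)
    (η1 η2 : ℚ) (θ : Fin n → ℚ) (hθ : ∀ i, 0 ≤ θ i)
    (hsum : η1 + η2 + ∑ i, θ i = 0) (s : Fin n → k × k) :
    (PnSemistable η1 η2 θ s ↔
      ((∀ i, s i = 0 → θ i = 0) ∧
        ∑ i ∈ Finset.univ.filter (fun i => (s i).2 = 0), θ i ≤ -η1 ∧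
        ∑ i ∈ Finset.univ.filter (fun i => (s i).1 = 0), θ i ≤ -η2)) ∧
    (PnStable η1 η2 θ s ↔
      ((∀ i, s i ≠ 0 ∧ 0 < θ i) ∧
        ∑ i ∈ Finset.univ.filter (fun i => (s i).2 = 0), θ i < -η1 ∧
        ∑ i ∈ Finset.univ.filter (fun i => (s i).1 = 0), θ i < -η2)) :=
  pn_semistable_stable_criterion_general η1 η2 θ hθ hsum s
end
end

section
/- Let k be a field, n ≥ 1, and (η_1,η_2,θ) ∈ ℚ × ℚ × ℚ^n with η_1 + η_2 + ∑_i θ_i = 0. There exists an (η_1,η_2,θ)-semistable representation s of P_n over k if and only if η_1 ≤ 0, η_2 ≤ 0 and θ_i ≥ 0 for all i. -/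
noncomputable section

open Finset
open scoped Classical

variable {k : Type*} [Field k]

/-!
Proof idea. The subrepresentations `(∅, k, 0)`, `(∅, 0, k)` and `({j ≠ i}, k, k)` exist for
every `s`, and their weights are `η₁`, `η₂` and `-θ_i`; so semistability forces the sign
conditions. Conversely, for `s_i = (1, 1)` any subrepresentation with `U ≠ ∅` has
`W₁ = W₂ = k`, so its weight is `-∑_{i ∉ U} θ_i ≤ 0`, while for `U = ∅` the weight is
`η₁ dim W₁ + η₂ dim W₂ ≤ 0`.
-/

section

variable {ι : Type*}

theorem pnIsSubrep_empty (s : ι → k × k) (W1 W2 : Submodule k k) : PnIsSubrep s ∅ W1 W2 := by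
  simp [PnIsSubrep]

theorem pnIsSubrep_top_top (s : ι → k × k) (U : Finset ι) : PnIsSubrep s U ⊤ ⊤ :=
  fun _ _ => ⟨Submodule.mem_top, Submodule.mem_top⟩

theorem PnIsSubrep.eq_top_of_const_one {U : Finset ι} {W1 W2 : Submodule k k}
    (h : PnIsSubrep (fun _ => ((1 : k), (1 : k))) U W1 W2) (hU : U.Nonempty) :
    W1 = ⊤ ∧ W2 = ⊤ := by
  obtain ⟨i, hi⟩ := hU
  exact ⟨(Ideal.eq_top_iff_one W1).2 (h i hi).1, (Ideal.eq_top_iff_one W2).2 (h i hi).2⟩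

variable [Fintype ι] {η1 η2 : ℚ} {θ : ι → ℚ} {s : ι → k × k}

theorem PnSemistable.eta1_nonpos (hs : PnSemistable η1 η2 θ s) : η1 ≤ 0 := by
  simpa using hs ∅ ⊤ ⊥ (pnIsSubrep_empty s ⊤ ⊥)

theorem PnSemistable.eta2_nonpos (hs : PnSemistable η1 η2 θ s) : η2 ≤ 0 := by
  simpa using hs ∅ ⊥ ⊤ (pnIsSubrep_empty s ⊥ ⊤)

theorem PnSemistable.theta_nonneg (hs : PnSemistable η1 η2 θ s)
    (hsum : η1 + η2 + ∑ i, θ i = 0) (i : ι) : 0 ≤ θ i := by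
  have hweight := hs (univ.erase i) ⊤ ⊤ (pnIsSubrep_top_top s _)
  have hsplit := add_sum_erase univ θ (mem_univ i)
  simp only [finrank_top, Module.finrank_self, Nat.cast_one, mul_one] at hweight
  linarith

theorem pnSemistable_const_one (h1 : η1 ≤ 0) (h2 : η2 ≤ 0) (hθ : ∀ i, 0 ≤ θ i)
    (hsum : η1 + η2 + ∑ i, θ i = 0) :
    PnSemistable η1 η2 θ (fun _ => ((1 : k), (1 : k))) := by
  intro U W1 W2 hsub
  rcases U.eq_empty_or_nonempty with rfl | hU
  · have := mul_nonpos_of_nonpos_of_nonneg h1 (Nat.cast_nonneg (α := ℚ) (Module.finrank k W1))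
    have := mul_nonpos_of_nonpos_of_nonneg h2 (Nat.cast_nonneg (α := ℚ) (Module.finrank k W2))
    simp only [sum_empty, add_zero]
    linarith
  · obtain ⟨rfl, rfl⟩ := hsub.eq_top_of_const_one hU
    have hle : ∑ j ∈ U, θ j ≤ ∑ j, θ j :=
      sum_le_sum_of_subset_of_nonneg (subset_univ U) fun j _ _ => hθ j
    simp only [finrank_top, Module.finrank_self, Nat.cast_one, mul_one]
    linarith

end

theorem exists_pn_semistable_iff_general {n : ℕ}
    (η1 η2 : ℚ) (θ : Fin n → ℚ) (hsum : η1 + η2 + ∑ i, θ i = 0) :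
    (∃ s : Fin n → k × k, PnSemistable η1 η2 θ s) ↔
      (η1 ≤ 0 ∧ η2 ≤ 0 ∧ ∀ i, 0 ≤ θ i) := by
  constructor
  · rintro ⟨s, hs⟩
    exact ⟨hs.eta1_nonpos, hs.eta2_nonpos, hs.theta_nonneg hsum⟩
  · rintro ⟨h1, h2, hθ⟩
    exact ⟨_, pnSemistable_const_one h1 h2 hθ hsum⟩

/-- An `(η₁,η₂,θ)`-semistable representation of `P_n` exists if and only if
`η₁ ≤ 0`, `η₂ ≤ 0` and `θ_i ≥ 0` for all `i`. -/
theorem exists_pn_semistable_iff {n : ℕ} (hn : 1 ≤ n)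
    (η1 η2 : ℚ) (θ : Fin n → ℚ) (hsum : η1 + η2 + ∑ i, θ i = 0) :
    (∃ s : Fin n → k × k, PnSemistable η1 η2 θ s) ↔
      (η1 ≤ 0 ∧ η2 ≤ 0 ∧ ∀ i, 0 ≤ θ i) :=
  exists_pn_semistable_iff_general η1 η2 θ hsum
end
end

section
/- Let n ≥ 2 and J ⊆ {1,…,n} with ∅ ≠ J ≠ {1,…,n}. Then {(η_1,η_2,θ) ∈ Δ^1×Δ^{n−1} : ∑_{i∈J} θ_i = −η_1} = conv({ e_i − f_1 : i ∈ J } ∪ { e_i − f_2 : i ∉ J }). -/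
/-!
The wall `W_J` is the image of the standard simplex `Δ^{n-1}` under the linear map
`θ ↦ (-∑_{i ∈ J} θ_i, -∑_{i ∉ J} θ_i, θ)`: on `Δ¹ × Δ^{n-1}` the equation defining
`W_J` forces `η₁` and then `η₂`. This map sends the vertex `e_i` of the simplex to `e_i - f₁` or
`e_i - f₂` according as `i ∈ J` or not, and linear maps commute with convex hulls.
-/

open Finset

variable {𝕜 ι : Type*} [CommRing 𝕜] [Fintype ι] [DecidableEq ι]

def wallMap (J : Finset ι) : (ι → 𝕜) →ₗ[𝕜] 𝕜 × 𝕜 × (ι → 𝕜) :=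
  (-∑ i ∈ J, LinearMap.proj i).prod ((-∑ i ∈ Jᶜ, LinearMap.proj i).prod LinearMap.id)

@[simp]
theorem wallMap_apply (J : Finset ι) (θ : ι → 𝕜) :
    wallMap J θ = (-∑ i ∈ J, θ i, -∑ i ∈ Jᶜ, θ i, θ) := by
  simp [wallMap]

theorem wallMap_single (J : Finset ι) (i : ι) :
    wallMap J (Pi.single i (1 : 𝕜)) =
      if i ∈ J then (-1, 0, Pi.single i 1) else (0, -1, Pi.single i 1) := by
  by_cases hi : i ∈ J <;> simp [hi, Pi.single_apply]

theorem wall_vertices_eq_range (J : Finset ι) :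
    {p : 𝕜 × 𝕜 × (ι → 𝕜) | (∃ i ∈ J, p = (-1, 0, Pi.single i 1)) ∨
        (∃ i ∉ J, p = (0, -1, Pi.single i 1))}
      = Set.range fun i ↦ wallMap J (Pi.single i (1 : 𝕜)) := by
  ext p
  simp only [Set.mem_ofPred_eq, Set.mem_range, wallMap_single]
  constructor
  · rintro (⟨i, hi, rfl⟩ | ⟨i, hi, rfl⟩) <;> exact ⟨i, by simp [hi]⟩
  · rintro ⟨i, rfl⟩
    by_cases hi : i ∈ J
    · exact .inl ⟨i, hi, by simp [hi]⟩
    · exact .inr ⟨i, hi, by simp [hi]⟩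

variable [PartialOrder 𝕜] [IsOrderedRing 𝕜]

theorem inner_wall_eq_image_stdSimplex (J : Finset ι) :
    {p : 𝕜 × 𝕜 × (ι → 𝕜) | (p.1 ≤ 0 ∧ p.2.1 ≤ 0 ∧ p.1 + p.2.1 = -1 ∧
        (∀ i, 0 ≤ p.2.2 i) ∧ ∑ i, p.2.2 i = 1) ∧ ∑ i ∈ J, p.2.2 i = -p.1}
      = wallMap J '' stdSimplex 𝕜 ι := by
  ext ⟨η₁, η₂, θ⟩
  have hsplit := sum_add_sum_compl J θ
  simp only [Set.mem_ofPred_eq, Set.mem_image, wallMap_apply, Prod.mk.injEq]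
  constructor
  · rintro ⟨⟨-, -, hη, hθ, hsum⟩, hJ⟩
    exact ⟨θ, ⟨hθ, hsum⟩, by rw [hJ, neg_neg],
      by linear_combination hJ - hη - hsplit - hsum, rfl⟩
  · rintro ⟨θ, ⟨hθ, hsum⟩, rfl, rfl, rfl⟩
    have hJ := sum_nonneg fun i (_ : i ∈ J) ↦ hθ i
    have hJc := sum_nonneg fun i (_ : i ∈ Jᶜ) ↦ hθ i
    exact ⟨⟨neg_nonpos.2 hJ, neg_nonpos.2 hJc, by rw [← neg_add, hsplit, hsum], hθ, hsum⟩,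
      (neg_neg _).symm⟩

theorem inner_wall_eq_convexHull_general {n : ℕ} (J : Finset (Fin n)) :
    {p : ℚ × ℚ × (Fin n → ℚ) | (p.1 ≤ 0 ∧ p.2.1 ≤ 0 ∧ p.1 + p.2.1 = -1 ∧
        (∀ i, 0 ≤ p.2.2 i) ∧ ∑ i, p.2.2 i = 1) ∧ ∑ i ∈ J, p.2.2 i = -p.1}
      = convexHull ℚ {p : ℚ × ℚ × (Fin n → ℚ) |
          (∃ i ∈ J, p = (-1, 0, Pi.single i 1)) ∨
          (∃ i ∉ J, p = (0, -1, Pi.single i 1))} := by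
  rw [inner_wall_eq_image_stdSimplex, wall_vertices_eq_range, Set.range_comp',
    ← LinearMap.image_convexHull, convexHull_rangle_single_eq_stdSimplex]

/-- The inner wall `W_J = {(η₁,η₂,θ) ∈ Δ¹×Δ^{n−1} : ∑_{i∈J} θ_i = −η₁}` is the convex hull
of the points `e_i − f₁` for `i ∈ J` and `e_i − f₂` for `i ∉ J`. -/
theorem inner_wall_eq_convexHull {n : ℕ} (hn : 2 ≤ n) (J : Finset (Fin n))
    (hJ : J ≠ ∅) (hJ' : J ≠ Finset.univ) :
    {p : ℚ × ℚ × (Fin n → ℚ) | (p.1 ≤ 0 ∧ p.2.1 ≤ 0 ∧ p.1 + p.2.1 = -1 ∧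
        (∀ i, 0 ≤ p.2.2 i) ∧ ∑ i, p.2.2 i = 1) ∧ ∑ i ∈ J, p.2.2 i = -p.1}
      = convexHull ℚ {p : ℚ × ℚ × (Fin n → ℚ) |
          (∃ i ∈ J, p = (-1, 0, Pi.single i 1)) ∨
          (∃ i ∉ J, p = (0, -1, Pi.single i 1))} :=
  inner_wall_eq_convexHull_general J
end

section
/- Let k be a field and s = (s_1,…,s_n) with s_i = (a_i,b_i) ∈ k × k and s_i ≠ (0,0) for all i. Set J_0 = {i : a_i = 0} and J_∞ = {i : b_i = 0} (these are disjoint). Then the set Θ(s) = {(η_1,η_2,θ) ∈ Δ^1×Δ^{n−1} : s is (η_1,η_2,θ)-semistable} satisfies Θ(s) = {(η_1,η_2,θ) ∈ Δ^1×Δ^{n−1} : ∑_{i∈J_∞} θ_i ≤ −η_1 and ∑_{i∈J_0} θ_i ≤ −η_2} = conv({ e_i − f_1 : i ∉ J_0 } ∪ { e_i − f_2 : i ∉ J_∞ }). -/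
noncomputable section

open Finset
open scoped Classical

variable {k : Type*} [Field k]

/-! Every subspace of `k` is `0` or `k`, and since no `s i` vanishes, the subrepresentations that
matter are `(U, 0, k)` with `U ⊆ J₀`, `(U, k, 0)` with `U ⊆ J_∞` and `(U, k, k)`; on the simplex
they give exactly the two wall inequalities. A point `(η₁, η₂, θ)` satisfying them is the convex
combination `∑ cᵢθᵢ (eᵢ − f₁) + ∑ (1 − cᵢ)θᵢ (eᵢ − f₂)`, where `c = 1` on `J_∞`, `c = 0` on `J₀`,
and elsewhere `c` is the constant making `∑ cᵢθᵢ = −η₁`; the two wall inequalities are exactly what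
puts that constant in `[0, 1]`. -/

/-- The weight space `Δ¹ × Δ^{ι}` of the paper. -/
def pnWeightSimplex (ι : Type*) [Fintype ι] : Set (ℚ × ℚ × (ι → ℚ)) :=
  {w | w.1 ≤ 0 ∧ w.2.1 ≤ 0 ∧ w.1 + w.2.1 = -1 ∧ (∀ i, 0 ≤ w.2.2 i) ∧ ∑ i, w.2.2 i = 1}

variable {ι : Type*} [Fintype ι]

def pnWallPolytope (s : ι → k × k) : Set (ℚ × ℚ × (ι → ℚ)) :=
  {w | w ∈ pnWeightSimplex ι ∧
    ∑ i ∈ univ.filter (fun i => (s i).2 = 0), w.2.2 i ≤ -w.1 ∧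
    ∑ i ∈ univ.filter (fun i => (s i).1 = 0), w.2.2 i ≤ -w.2.1}

/-- The points `e_i − f₁` for `a_i ≠ 0` and `e_i − f₂` for `b_i ≠ 0`. -/
def pnVertices [DecidableEq ι] (s : ι → k × k) : Set (ℚ × ℚ × (ι → ℚ)) :=
  {p | (∃ i, (s i).1 ≠ 0 ∧ p = (-1, 0, Pi.single i 1)) ∨
    (∃ i, (s i).2 ≠ 0 ∧ p = (0, -1, Pi.single i 1))}

section Semistability

variable {s : ι → k × k} {η1 η2 : ℚ} {θ : ι → ℚ}

lemma PnIsSubrep.subset_filter_fst_eq_zero {U : Finset ι} {W2 : Submodule k k}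
    (hU : PnIsSubrep s U ⊥ W2) : U ⊆ univ.filter (fun i => (s i).1 = 0) :=
  fun i hi => mem_filter.2 ⟨mem_univ i, (Submodule.mem_bot k).1 (hU i hi).1⟩

lemma PnIsSubrep.subset_filter_snd_eq_zero {U : Finset ι} {W1 : Submodule k k}
    (hU : PnIsSubrep s U W1 ⊥) : U ⊆ univ.filter (fun i => (s i).2 = 0) :=
  fun i hi => mem_filter.2 ⟨mem_univ i, (Submodule.mem_bot k).1 (hU i hi).2⟩

lemma PnSemistable.sum_filter_snd_eq_zero_le (h : PnSemistable η1 η2 θ s) :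
    ∑ i ∈ univ.filter (fun i => (s i).2 = 0), θ i ≤ -η1 := by
  have := h (univ.filter fun i => (s i).2 = 0) ⊤ ⊥ fun i hi =>
    ⟨Submodule.mem_top, (mem_filter.1 hi).2 ▸ Submodule.zero_mem _⟩
  simp only [finrank_top, Module.finrank_self, finrank_bot, Nat.cast_one, Nat.cast_zero, mul_one,
    mul_zero, add_zero] at this
  linarith

lemma PnSemistable.sum_filter_fst_eq_zero_le (h : PnSemistable η1 η2 θ s) :
    ∑ i ∈ univ.filter (fun i => (s i).1 = 0), θ i ≤ -η2 := by
  have := h (univ.filter fun i => (s i).1 = 0) ⊥ ⊤ fun i hi =>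
    ⟨(mem_filter.1 hi).2 ▸ Submodule.zero_mem _, Submodule.mem_top⟩
  simp only [finrank_top, Module.finrank_self, finrank_bot, Nat.cast_one, Nat.cast_zero, mul_one,
    mul_zero, zero_add] at this
  linarith

lemma pnSemistable_of_sum_filter_le (hs : ∀ i, s i ≠ 0) (hθ : ∀ i, 0 ≤ θ i)
    (htotal : η1 + η2 + ∑ i, θ i ≤ 0)
    (hsnd : ∑ i ∈ univ.filter (fun i => (s i).2 = 0), θ i ≤ -η1)
    (hfst : ∑ i ∈ univ.filter (fun i => (s i).1 = 0), θ i ≤ -η2) :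
    PnSemistable η1 η2 θ s := by
  intro U W1 W2 hU
  have hθU {V : Finset ι} (hUV : U ⊆ V) : ∑ i ∈ U, θ i ≤ ∑ i ∈ V, θ i :=
    sum_le_sum_of_subset_of_nonneg hUV fun i _ _ => hθ i
  rcases Ideal.eq_bot_or_top W1 with rfl | rfl <;>
    rcases Ideal.eq_bot_or_top W2 with rfl | rfl <;>
    simp only [finrank_bot, finrank_top, Module.finrank_self, Nat.cast_zero, Nat.cast_one,
      mul_zero, mul_one, zero_add, add_zero]
  · have hU0 : U = ∅ := subset_empty.1 fun i hi =>
      absurd (Prod.ext ((Submodule.mem_bot k).1 (hU i hi).1) ((Submodule.mem_bot k).1 (hU i hi).2))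
        (hs i)
    simp [hU0]
  · linarith [hθU hU.subset_filter_fst_eq_zero]
  · linarith [hθU hU.subset_filter_snd_eq_zero]
  · linarith [hθU (subset_univ U)]

lemma pnSemistable_iff_of_mem_pnWeightSimplex (hs : ∀ i, s i ≠ 0)
    {w : ℚ × ℚ × (ι → ℚ)} (hw : w ∈ pnWeightSimplex ι) :
    PnSemistable w.1 w.2.1 w.2.2 s ↔
      ∑ i ∈ univ.filter (fun i => (s i).2 = 0), w.2.2 i ≤ -w.1 ∧
      ∑ i ∈ univ.filter (fun i => (s i).1 = 0), w.2.2 i ≤ -w.2.1 := by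
  obtain ⟨-, -, hη, hθ, hθ1⟩ := hw
  exact ⟨fun h => ⟨h.sum_filter_snd_eq_zero_le, h.sum_filter_fst_eq_zero_le⟩,
    fun h => pnSemistable_of_sum_filter_le hs hθ (by linarith) h.1 h.2⟩

lemma setOf_pnSemistable_eq_pnWallPolytope (hs : ∀ i, s i ≠ 0) :
    {w | w ∈ pnWeightSimplex ι ∧ PnSemistable w.1 w.2.1 w.2.2 s} = pnWallPolytope s :=
  Set.ext fun _ => and_congr_right (pnSemistable_iff_of_mem_pnWeightSimplex hs)

end Semistability

section Convexity

variable {𝕜 E : Type*} [Field 𝕜] [LinearOrder 𝕜] [IsStrictOrderedRing 𝕜] [AddCommGroup E]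
  [Module 𝕜 E]

lemma sum_smul_mem_convexHull_of_ne_zero {s : Set E} {w : ι → 𝕜} {z : ι → E}
    (h₀ : ∀ i, 0 ≤ w i) (h₁ : ∑ i, w i = 1) (hz : ∀ i, w i ≠ 0 → z i ∈ s) :
    ∑ i, w i • z i ∈ convexHull 𝕜 s := by
  simpa only [finsum_eq_sum_of_fintype] using
    (convex_convexHull 𝕜 s).finsum_mem h₀ (by rwa [finsum_eq_sum_of_fintype])
      fun i hi => subset_convexHull 𝕜 s (hz i hi)

variable [DecidableEq ι]

lemma exists_sum_mul_eq_of_le_of_le {θ : ι → 𝕜} (hθ : ∀ i, 0 ≤ θ i) {A B : Finset ι} (hAB : Disjoint A B)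
    {α : 𝕜} (hA : ∑ i ∈ A, θ i ≤ α) (hB : α ≤ ∑ i, θ i - ∑ i ∈ B, θ i) :
    ∃ c : ι → 𝕜, (∀ i, 0 ≤ c i ∧ c i ≤ 1) ∧ (∀ i ∈ A, c i = 1) ∧ (∀ i ∈ B, c i = 0) ∧
      ∑ i, c i * θ i = α := by
  set C := (A ∪ B)ᶜ
  have hC : ∑ i ∈ C, θ i = ∑ i, θ i - ∑ i ∈ A, θ i - ∑ i ∈ B, θ i := by
    rw [← sum_compl_add_sum (A ∪ B), sum_union hAB]; ring
  have hC0 : 0 ≤ ∑ i ∈ C, θ i := sum_nonneg fun i _ => hθ i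
  -- if `θ` has no mass on `C` then `α = θ(A)` and `r = 0 / 0 = 0` still works
  set r := (α - ∑ i ∈ A, θ i) / ∑ i ∈ C, θ i
  have hr : r * ∑ i ∈ C, θ i = α - ∑ i ∈ A, θ i := by
    rcases hC0.eq_or_lt with h | h
    · rw [← h] at hC ⊢; linarith
    · exact div_mul_cancel₀ _ h.ne'
  refine ⟨fun i => if i ∈ A then 1 else if i ∈ C then r else 0, fun i => ?_,
    fun i hi => if_pos hi, fun i hi => ?_, ?_⟩
  · have : 0 ≤ r := div_nonneg (by linarith) hC0
    have : r ≤ 1 := div_le_one_of_le₀ (by linarith) hC0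
    dsimp only
    split_ifs <;> constructor <;> linarith
  · simp [C, hi, disjoint_right.1 hAB hi]
  · calc ∑ i, (if i ∈ A then 1 else if i ∈ C then r else 0) * θ i
        = ∑ i, ((if i ∈ A then θ i else 0) + if i ∈ C then r * θ i else 0) := by
          refine sum_congr rfl fun i _ => ?_
          by_cases i ∈ A <;> by_cases i ∈ C <;> simp_all [C]
      _ = α := by
          rw [sum_add_distrib, Fintype.sum_ite_mem, Fintype.sum_ite_mem, ← mul_sum, hr]; ring

end Convexity

lemma convex_pnWallPolytope (s : ι → k × k) : Convex ℚ (pnWallPolytope s) := by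
  rintro x ⟨⟨hx1, hx2, hx12, hx, hxsum⟩, hxsnd, hxfst⟩ y ⟨⟨hy1, hy2, hy12, hy, hysum⟩, hysnd, hyfst⟩
    a b ha hb hab
  simp only [pnWallPolytope, pnWeightSimplex, Set.mem_ofPred_eq, Prod.fst_add, Prod.snd_add,
    Prod.smul_fst, Prod.smul_snd, Pi.add_apply, Pi.smul_apply, smul_eq_mul, sum_add_distrib,
    ← mul_sum, hxsum, hysum]
  refine ⟨⟨by nlinarith, by nlinarith, by linear_combination a * hx12 + b * hy12 - hab,
    fun i => by nlinarith [hx i, hy i], by linarith⟩, by nlinarith, by nlinarith⟩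

variable [DecidableEq ι]

lemma pnVertices_subset_pnWallPolytope (s : ι → k × k) : pnVertices s ⊆ pnWallPolytope s := by
  rintro p (⟨i, hi, rfl⟩ | ⟨i, hi, rfl⟩) <;>
    refine ⟨⟨by norm_num, by norm_num, by norm_num, fun j => ?_, by simp⟩, ?_, ?_⟩ <;>
    simp [Pi.single_apply, hi] <;> split_ifs <;> norm_num

lemma pnWallPolytope_subset_convexHull {s : ι → k × k} (hs : ∀ i, s i ≠ 0) :
    pnWallPolytope s ⊆ convexHull ℚ (pnVertices s) := by
  rintro ⟨η1, η2, θ⟩ ⟨⟨-, -, hη, hθ, hθ1⟩, hsnd, hfst⟩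
  dsimp only at hη hθ hθ1 hsnd hfst
  have hdisj : Disjoint (univ.filter fun i => (s i).2 = 0) (univ.filter fun i => (s i).1 = 0) :=
    disjoint_filter.2 fun i _ h2 h1 => hs i (Prod.ext h1 h2)
  obtain ⟨c, hc, hcA, hcB, hcsum⟩ := exists_sum_mul_eq_of_le_of_le hθ hdisj hsnd (by linarith)
  set w : ι ⊕ ι → ℚ := Sum.elim (fun i => c i * θ i) (fun i => (1 - c i) * θ i)
  set z : ι ⊕ ι → ℚ × ℚ × (ι → ℚ) :=
    Sum.elim (fun i => (-1, 0, Pi.single i 1)) (fun i => (0, -1, Pi.single i 1))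
  have hpoint : ∑ j, w j • z j = (η1, η2, θ) := by
    rw [Fintype.sum_sum_type]
    ext
    · simp [w, z, Prod.fst_sum, hcsum]
    · simp only [w, z, Sum.elim_inl, Sum.elim_inr, Prod.smul_mk, smul_eq_mul, mul_neg, mul_one,
        mul_zero, Prod.snd_add, Prod.snd_sum, Prod.fst_add, Prod.fst_sum, sum_const_zero, zero_add,
        sub_mul, one_mul, neg_sub, sum_sub_distrib]
      linarith
    · simp only [w, z, Sum.elim_inl, Sum.elim_inr, Prod.smul_mk, smul_eq_mul, Prod.snd_add,
        Prod.snd_sum, Pi.add_apply, Finset.sum_apply, Pi.smul_apply, Pi.single_apply, mul_ite,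
        mul_one, mul_zero, sum_ite_eq, mem_univ, if_true]
      ring
  rw [← hpoint]
  refine sum_smul_mem_convexHull_of_ne_zero ?_ ?_ ?_
  · rintro (i | i)
    · exact mul_nonneg (hc i).1 (hθ i)
    · exact mul_nonneg (sub_nonneg.2 (hc i).2) (hθ i)
  · simp [w, Fintype.sum_sum_type, sub_mul, sum_sub_distrib, hθ1]
  · rintro (i | i) hi
    · exact Or.inl ⟨i, fun h => hi (by simp [w, hcB i (by simp [h])]), rfl⟩
    · exact Or.inr ⟨i, fun h => hi (by simp [w, hcA i (by simp [h])]), rfl⟩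

lemma convexHull_pnVertices {s : ι → k × k} (hs : ∀ i, s i ≠ 0) :
    convexHull ℚ (pnVertices s) = pnWallPolytope s :=
  (convexHull_min (pnVertices_subset_pnWallPolytope s) (convex_pnWallPolytope s)).antisymm
    (pnWallPolytope_subset_convexHull hs)

/-- Description of the polytope `Θ(s) ⊆ Δ¹×Δ^{n−1}` of weights for which a representation
`s` of `P_n` with all `s_i ≠ 0` is semistable: it is cut out by the two walls
`W_{J₀^∁}`, `W_{J_∞}`, and it is the convex hull of the points `e_i − f₁` for `i ∉ J₀` and
`e_i − f₂` for `i ∉ J_∞`. -/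
theorem pn_semistability_polytope {n : ℕ} (s : Fin n → k × k) (hs : ∀ i, s i ≠ 0) :
    {w : ℚ × ℚ × (Fin n → ℚ) | (w.1 ≤ 0 ∧ w.2.1 ≤ 0 ∧ w.1 + w.2.1 = -1 ∧
        (∀ i, 0 ≤ w.2.2 i) ∧ ∑ i, w.2.2 i = 1) ∧ PnSemistable w.1 w.2.1 w.2.2 s}
      = {w : ℚ × ℚ × (Fin n → ℚ) | (w.1 ≤ 0 ∧ w.2.1 ≤ 0 ∧ w.1 + w.2.1 = -1 ∧
          (∀ i, 0 ≤ w.2.2 i) ∧ ∑ i, w.2.2 i = 1) ∧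
          ∑ i ∈ Finset.univ.filter (fun i => (s i).2 = 0), w.2.2 i ≤ -w.1 ∧
          ∑ i ∈ Finset.univ.filter (fun i => (s i).1 = 0), w.2.2 i ≤ -w.2.1} ∧
    {w : ℚ × ℚ × (Fin n → ℚ) | (w.1 ≤ 0 ∧ w.2.1 ≤ 0 ∧ w.1 + w.2.1 = -1 ∧
        (∀ i, 0 ≤ w.2.2 i) ∧ ∑ i, w.2.2 i = 1) ∧ PnSemistable w.1 w.2.1 w.2.2 s}
      = convexHull ℚ {p : ℚ × ℚ × (Fin n → ℚ) |
          (∃ i : Fin n, (s i).1 ≠ 0 ∧ p = (-1, 0, Pi.single i 1)) ∨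
          (∃ i : Fin n, (s i).2 ≠ 0 ∧ p = (0, -1, Pi.single i 1))} :=
  ⟨setOf_pnSemistable_eq_pnWallPolytope hs,
    (setOf_pnSemistable_eq_pnWallPolytope hs).trans (convexHull_pnVertices hs).symm⟩
end
end

section
/- Let k be a field, n ≥ 1, and a ≠ b in {1,…,n+2}. Let θ ∈ Δ(2,n+2) satisfy 0 < ∑_{i≠a,b} θ_i < θ_a + θ_b. Set λ = 1/∑_{i≠a,b} θ_i and define the P_n-weight w' = (η'_1, η'_2, (θ'_i)_{i≠a,b}) indexed by {1,…,n+2}∖{a,b} by η'_1 = λ(θ_a − 1), η'_2 = λ(θ_b − 1), θ'_i = λθ_i (note η'_1 + η'_2 + ∑_{i≠a,b} θ'_i = 0). Then for every tuple s = (s_1,…,s_{n+2}) of vectors in k^2: s is θ-semistable if and only if s_a and s_b are linearly independent and the representation (a_i, b_i)_{i≠a,b} of P_n over k, where s_i = a_i·s_a + b_i·s_b, is w'-semistable; and likewise s is θ-stable if and only if s_a and s_b are linearly independent and (a_i, b_i)_{i≠a,b} is w'-stable. -/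
noncomputable section

open Finset
open scoped Classical

variable {k : Type*} [Field k]

/-!
Since `θ_a + θ_b > 1`, the subrepresentation `({a, b}, span {s_a, s_b})` shows that a
semistable `s` has `s_a, s_b` linearly independent; write `B : k × k ≃ k²` for the resulting
coordinate isomorphism. A `P_n`-subrepresentation `(V, W₁, W₂)` gives the
`Q_{n+2}`-subrepresentation `(V ∪ {a | W₁ = k} ∪ {b | W₂ = k}, B (W₁ × W₂))`, whose `θ`-weight
is exactly `1/λ` times its `w'`-weight. Conversely, a subspace `W ⊆ k²` that is `0` or contains
`s_a` or `s_b` is of the form `B (W₁ × W₂)`, and `(U, W)` then has weight at most `1/λ` times that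
of `(U ∖ {a, b}, W₁, W₂)`, strictly less if `U` omits `a` while `W₁ = k` (as `θ_a > 0`), or
likewise for `b`; every other `W` is a line avoiding `s_a` and `s_b`, so `a, b ∉ U` and
`θ(U, W) ≤ -1 + ∑_{i ≠ a,b} θ_i < 0`.
-/

open Module

theorem Finset.sum_eq_ite_add_ite_add_sum_subtype {ι M : Type*} [DecidableEq ι] [AddCommMonoid M]
    {a b : ι} (hab : a ≠ b) (U : Finset ι) (f : ι → M) :
    ∑ i ∈ U, f i = (if a ∈ U then f a else 0) + (if b ∈ U then f b else 0) +
      ∑ i ∈ U.subtype (fun i => i ≠ a ∧ i ≠ b), f i := by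
  rw [← U.sum_filter_add_sum_filter_not (fun i => i ≠ a ∧ i ≠ b), sum_subtype_eq_sum_filter,
    add_comm, sum_filter, ← U.sum_ite_eq' a f, ← U.sum_ite_eq' b f, ← sum_add_distrib]
  congr 1
  refine sum_congr rfl fun i _ => ?_
  by_cases ha : i = a <;> by_cases hb : i = b <;> simp_all

theorem Finset.eq_of_subtype_eq_of_mem_iff {ι : Type*} [DecidableEq ι] {a b : ι}
    {U U' : Finset ι} (h : U.subtype (fun i => i ≠ a ∧ i ≠ b) = U'.subtype _)
    (ha : a ∈ U ↔ a ∈ U') (hb : b ∈ U ↔ b ∈ U') : U = U' := by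
  ext i
  by_cases hi : i ≠ a ∧ i ≠ b
  · simpa [hi] using congrArg (⟨i, hi⟩ ∈ ·) h
  · obtain rfl | rfl : i = a ∨ i = b := by tauto
    exacts [ha, hb]

theorem Submodule.finrank_prod {M N : Type*} [AddCommGroup M] [Module k M] [AddCommGroup N]
    [Module k N] [FiniteDimensional k M] [FiniteDimensional k N]
    (p : Submodule k M) (q : Submodule k N) :
    finrank k (p.prod q) = finrank k p + finrank k q := by
  have hrange : LinearMap.range (p.subtype.prodMap q.subtype) = p.prod q := by
    ext ⟨x, y⟩
    simp
  rw [← hrange, LinearMap.finrank_range_of_inj (p.injective_subtype.prodMap q.injective_subtype),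
    Module.finrank_prod]

theorem Submodule.finrank_eq_ite_eq_top (W : Submodule k k) :
    finrank k W = if W = ⊤ then 1 else 0 := by
  rcases Ideal.eq_bot_or_top W with h | h
  · rw [if_neg (h ▸ bot_ne_top), h, finrank_bot]
  · rw [if_pos h, h, finrank_top, finrank_self]

theorem ite_le_finrank_of_imp_eq_top {P : Prop} [Decidable P] {W : Submodule k k}
    (h : P → W = ⊤) : (if P then 1 else 0 : ℚ) ≤ finrank k W := by
  split_ifs with hP
  · rw [h hP, finrank_top, finrank_self, Nat.cast_one]
  · positivity

theorem Submodule.eq_prod_comap_inl_comap_inr {R : Type*} [Ring R] {X : Submodule R (R × R)}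
    (h : ((1 : R), (0 : R)) ∈ X ∨ ((0 : R), (1 : R)) ∈ X ∨ X = ⊥) :
    X = (X.comap (LinearMap.inl R R R)).prod (X.comap (LinearMap.inr R R R)) := by
  refine le_antisymm (fun x hx => ?_) (fun x hx => by simpa using X.add_mem hx.1 hx.2)
  obtain ⟨x, y⟩ := x
  rcases h with h | h | rfl
  · have h1 : (x, (0 : R)) ∈ X := by simpa using X.smul_mem x h
    exact ⟨h1, by simpa using X.sub_mem hx h1⟩
  · have h2 : ((0 : R), y) ∈ X := by simpa using X.smul_mem y h
    exact ⟨by simpa using X.sub_mem hx h2, h2⟩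
  · simp_all

section PairEquiv

variable {V : Type*} [AddCommGroup V] [Module k V] [FiniteDimensional k V] {v w : V}

def LinearIndependent.pairEquiv (h : LinearIndependent k ![v, w]) (hV : finrank k V = 2) :
    (k × k) ≃ₗ[k] V :=
  LinearEquiv.ofBijective
    ((LinearMap.toSpanSingleton k V v).coprod (LinearMap.toSpanSingleton k V w)) <| by
    have hinj : Function.Injective
        ((LinearMap.toSpanSingleton k V v).coprod (LinearMap.toSpanSingleton k V w)) := by
      rw [← LinearMap.ker_eq_bot, LinearMap.ker_eq_bot']
      rintro ⟨x, y⟩ hxy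
      exact Prod.ext_iff.2 (LinearIndependent.pair_iff.1 h x y hxy)
    exact ⟨hinj, (LinearMap.injective_iff_surjective_of_finrank_eq_finrank (by simp [hV])).1 hinj⟩

@[simp]
theorem LinearIndependent.pairEquiv_apply (h : LinearIndependent k ![v, w])
    (hV : finrank k V = 2) (x : k × k) : h.pairEquiv hV x = x.1 • v + x.2 • w :=
  rfl

theorem LinearIndependent.exists_eq_smul_add_smul (h : LinearIndependent k ![v, w])
    (hV : finrank k V = 2) (x : V) : ∃ p : k × k, x = p.1 • v + p.2 • w :=
  ⟨(h.pairEquiv hV).symm x, by rw [← h.pairEquiv_apply hV, LinearEquiv.apply_symm_apply]⟩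

end PairEquiv

section Reduction

variable {m : ℕ} {a b : Fin m} {θ : Fin m → ℚ} {lam : ℚ} {s : Fin m → Fin 2 → k}
  {c : {i : Fin m // i ≠ a ∧ i ≠ b} → k × k}

theorem linearIndependent_of_qnSemistable (hab : a ≠ b) (hθ : 1 < θ a + θ b)
    (h : QnSemistable θ s) : LinearIndependent k ![s a, s b] := by
  by_contra hli
  have hle : finrank k (Submodule.span k (Set.range ![s a, s b])) ≤ 1 := by
    have := finrank_range_le_card (R := k) ![s a, s b]
    have := mt linearIndependent_iff_card_eq_finrank_span.2 hli
    simp only [Fintype.card_fin, Set.finrank] at *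
    omega
  have hsub : QnIsSubrep s {a, b} (Submodule.span k (Set.range ![s a, s b])) := by
    intro i hi
    rcases mem_insert.1 hi with rfl | hi
    · exact Submodule.subset_span ⟨0, rfl⟩
    · rw [mem_singleton.1 hi]
      exact Submodule.subset_span ⟨1, rfl⟩
  have hθ' := h _ _ hsub
  rw [sum_pair hab] at hθ'
  have : (finrank k (Submodule.span k (Set.range ![s a, s b])) : ℚ) ≤ 1 := by exact_mod_cast hle
  linarith

theorem neg_finrank_add_sum_lt_zero_of_notMem (hθ : ∀ i, 0 ≤ θ i)
    (hT : ∑ i ∈ ({a, b} : Finset (Fin m))ᶜ, θ i < 1) {U : Finset (Fin m)}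
    {W : Submodule k (Fin 2 → k)} (hU : QnIsSubrep s U W) (hW : W ≠ ⊥) (ha : s a ∉ W)
    (hb : s b ∉ W) : -(finrank k W : ℚ) + ∑ i ∈ U, θ i < 0 := by
  have hpos : (1 : ℚ) ≤ finrank k W := by
    exact_mod_cast Nat.one_le_iff_ne_zero.2 (mt Submodule.finrank_eq_zero.1 hW)
  have hsum : ∑ i ∈ U, θ i ≤ ∑ i ∈ ({a, b} : Finset (Fin m))ᶜ, θ i := by
    refine sum_le_sum_of_subset_of_nonneg (fun i hi => ?_) fun i _ _ => hθ i
    simp only [mem_compl, mem_insert, mem_singleton, not_or]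
    exact ⟨fun h => ha (h ▸ hU i hi), fun h => hb (h ▸ hU i hi)⟩
  linarith

theorem exists_qnIsSubrep_of_pnIsSubrep (hli : LinearIndependent k ![s a, s b])
    (hc : ∀ i, s i.val = (c i).1 • s a + (c i).2 • s b)
    {V : Finset {i : Fin m // i ≠ a ∧ i ≠ b}} {W1 W2 : Submodule k k}
    (hV : PnIsSubrep c V W1 W2) :
    ∃ (U : Finset (Fin m)) (W : Submodule k (Fin 2 → k)), QnIsSubrep s U W ∧
      U.subtype (fun i => i ≠ a ∧ i ≠ b) = V ∧ (a ∈ U ↔ W1 = ⊤) ∧ (b ∈ U ↔ W2 = ⊤) ∧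
      finrank k W = finrank k W1 + finrank k W2 := by
  set B := hli.pairEquiv (finrank_fin_fun k)
  set W := (W1.prod W2).map (B : k × k →ₗ[k] Fin 2 → k)
  have hmem (x : k × k) : B x ∈ W ↔ x.1 ∈ W1 ∧ x.2 ∈ W2 := by
    simp [W, Submodule.mem_map_equiv]
  have hsi : ∀ i, s i.val = B (c i) := hc
  have hsa : s a = B (1, 0) := by simp [B]
  have hsb : s b = B (0, 1) := by simp [B]
  -- for `i = a, b` the second condition is vacuous, so `a ∈ U ↔ s a ∈ W ↔ W1 = ⊤`
  refine ⟨univ.filter fun i => s i ∈ W ∧ ∀ h : i ≠ a ∧ i ≠ b, ⟨i, h⟩ ∈ V, W,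
    fun i hi => (mem_filter.1 hi).2.1, ?_, ?_, ?_, ?_⟩
  · ext i
    simp only [mem_subtype, mem_filter, mem_univ, true_and, hsi, hmem]
    exact ⟨fun h => h.2 i.2, fun h => ⟨hV i h, fun _ => h⟩⟩
  · simp [hsa, hmem, Ideal.eq_top_iff_one]
  · simp [hsb, hmem, Ideal.eq_top_iff_one]
  · rw [LinearEquiv.finrank_map_eq, Submodule.finrank_prod]

theorem exists_pnIsSubrep_of_qnIsSubrep (hli : LinearIndependent k ![s a, s b])
    (hc : ∀ i, s i.val = (c i).1 • s a + (c i).2 • s b)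
    {U : Finset (Fin m)} {W : Submodule k (Fin 2 → k)} (hU : QnIsSubrep s U W)
    (hW : s a ∈ W ∨ s b ∈ W ∨ W = ⊥) :
    ∃ W1 W2 : Submodule k k, PnIsSubrep c (U.subtype (fun i => i ≠ a ∧ i ≠ b)) W1 W2 ∧
      (a ∈ U → W1 = ⊤) ∧ (b ∈ U → W2 = ⊤) ∧ finrank k W = finrank k W1 + finrank k W2 := by
  set B := hli.pairEquiv (finrank_fin_fun k)
  set X := W.map (B.symm : (Fin 2 → k) →ₗ[k] k × k)
  have hsi : ∀ i, s i.val = B (c i) := hc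
  have hsa : s a = B (1, 0) := by simp [B]
  have hsb : s b = B (0, 1) := by simp [B]
  have hX : X = (X.comap (LinearMap.inl k k k)).prod (X.comap (LinearMap.inr k k k)) := by
    refine Submodule.eq_prod_comap_inl_comap_inr ?_
    rcases hW with h | h | rfl
    · exact Or.inl (by simpa [X, hsa, Submodule.mem_map_equiv] using h)
    · exact Or.inr (Or.inl (by simpa [X, hsb, Submodule.mem_map_equiv] using h))
    · exact Or.inr (Or.inr (by simp [X]))
  refine ⟨X.comap (LinearMap.inl k k k), X.comap (LinearMap.inr k k k), fun i hi => ?_,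
    fun ha => ?_, fun hb => ?_, ?_⟩
  · have hci : c i ∈ X := by
      simpa [X, hsi, Submodule.mem_map_equiv] using hU _ (mem_subtype.1 hi)
    rw [hX] at hci
    exact hci
  · simpa [Ideal.eq_top_iff_one, X, hsa] using hU a ha
  · simpa [Ideal.eq_top_iff_one, X, hsb] using hU b hb
  · rw [← Submodule.finrank_prod, ← hX, LinearEquiv.finrank_map_eq]

theorem mul_neg_add_sum_eq (hab : a ≠ b) (U : Finset (Fin m)) {d d1 d2 : ℚ}
    (hd : d = d1 + d2) :
    lam * (-d + ∑ i ∈ U, θ i) =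
      lam * (θ a - 1) * d1 + lam * (θ b - 1) * d2 +
        ∑ i ∈ U.subtype (fun i => i ≠ a ∧ i ≠ b), lam * θ i -
        lam * θ a * (d1 - if a ∈ U then 1 else 0) - lam * θ b * (d2 - if b ∈ U then 1 else 0) := by
  rw [U.sum_eq_ite_add_ite_add_sum_subtype hab, ← mul_sum, hd]
  split_ifs <;> ring

section Weights

variable {U : Finset (Fin m)} {W : Submodule k (Fin 2 → k)} {W1 W2 : Submodule k k}

theorem mul_neg_finrank_add_sum_eq (hab : a ≠ b) (ha : a ∈ U ↔ W1 = ⊤) (hb : b ∈ U ↔ W2 = ⊤)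
    (hW : finrank k W = finrank k W1 + finrank k W2) :
    lam * (-(finrank k W : ℚ) + ∑ i ∈ U, θ i) =
      lam * (θ a - 1) * finrank k W1 + lam * (θ b - 1) * finrank k W2 +
        ∑ i ∈ U.subtype (fun i => i ≠ a ∧ i ≠ b), lam * θ i := by
  rw [mul_neg_add_sum_eq (d1 := finrank k W1) (d2 := finrank k W2) hab U
    (by rw [hW, Nat.cast_add]), W1.finrank_eq_ite_eq_top, W2.finrank_eq_ite_eq_top]
  simp only [← ha, ← hb, Nat.cast_ite, Nat.cast_one, Nat.cast_zero]
  ring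

theorem mul_neg_finrank_add_sum_le (hab : a ≠ b) (hθa : 0 ≤ θ a) (hθb : 0 ≤ θ b)
    (hlam : 0 ≤ lam) (ha : a ∈ U → W1 = ⊤) (hb : b ∈ U → W2 = ⊤)
    (hW : finrank k W = finrank k W1 + finrank k W2) :
    lam * (-(finrank k W : ℚ) + ∑ i ∈ U, θ i) ≤
      lam * (θ a - 1) * finrank k W1 + lam * (θ b - 1) * finrank k W2 +
        ∑ i ∈ U.subtype (fun i => i ≠ a ∧ i ≠ b), lam * θ i := by
  rw [mul_neg_add_sum_eq hab U (by rw [hW, Nat.cast_add])]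
  linarith [mul_nonneg (mul_nonneg hlam hθa) (sub_nonneg.2 (ite_le_finrank_of_imp_eq_top ha)),
    mul_nonneg (mul_nonneg hlam hθb) (sub_nonneg.2 (ite_le_finrank_of_imp_eq_top hb))]

theorem mul_neg_finrank_add_sum_lt (hab : a ≠ b) (hθa : 0 < θ a) (hθb : 0 < θ b)
    (hlam : 0 < lam) (ha : a ∈ U → W1 = ⊤) (hb : b ∈ U → W2 = ⊤)
    (hW : finrank k W = finrank k W1 + finrank k W2)
    (hstrict : a ∉ U ∧ W1 = ⊤ ∨ b ∉ U ∧ W2 = ⊤) :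
    lam * (-(finrank k W : ℚ) + ∑ i ∈ U, θ i) <
      lam * (θ a - 1) * finrank k W1 + lam * (θ b - 1) * finrank k W2 +
        ∑ i ∈ U.subtype (fun i => i ≠ a ∧ i ≠ b), lam * θ i := by
  rw [mul_neg_add_sum_eq hab U (by rw [hW, Nat.cast_add])]
  have hca := mul_nonneg (mul_nonneg hlam.le hθa.le)
    (sub_nonneg.2 (ite_le_finrank_of_imp_eq_top ha))
  have hcb := mul_nonneg (mul_nonneg hlam.le hθb.le)
    (sub_nonneg.2 (ite_le_finrank_of_imp_eq_top hb))
  have h1 : (finrank k (⊤ : Submodule k k) : ℚ) = 1 := by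
    rw [finrank_top, finrank_self, Nat.cast_one]
  rcases hstrict with ⟨ha', rfl⟩ | ⟨hb', rfl⟩
  · rw [if_neg ha', h1] at hca ⊢
    linarith [mul_pos hlam hθa]
  · rw [if_neg hb', h1] at hcb ⊢
    linarith [mul_pos hlam hθb]

end Weights

theorem pnSemistable_of_qnSemistable (hab : a ≠ b) (hlam : 0 ≤ lam)
    (hli : LinearIndependent k ![s a, s b]) (hc : ∀ i, s i.val = (c i).1 • s a + (c i).2 • s b)
    (h : QnSemistable θ s) :
    PnSemistable (lam * (θ a - 1)) (lam * (θ b - 1))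
      (fun i : {i : Fin m // i ≠ a ∧ i ≠ b} => lam * θ i.val) c := by
  intro V W1 W2 hV
  obtain ⟨U, W, hU, rfl, ha, hb, hW⟩ := exists_qnIsSubrep_of_pnIsSubrep hli hc hV
  rw [← mul_neg_finrank_add_sum_eq hab ha hb hW]
  exact mul_nonpos_of_nonneg_of_nonpos hlam (h U W hU)

theorem pnStable_of_qnStable (hab : a ≠ b) (hlam : 0 < lam)
    (hli : LinearIndependent k ![s a, s b]) (hc : ∀ i, s i.val = (c i).1 • s a + (c i).2 • s b)
    (h : QnStable θ s) :
    PnStable (lam * (θ a - 1)) (lam * (θ b - 1))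
      (fun i : {i : Fin m // i ≠ a ∧ i ≠ b} => lam * θ i.val) c := by
  refine ⟨pnSemistable_of_qnSemistable hab hlam.le hli hc h.1, fun V W1 W2 hV hne hnf => ?_⟩
  obtain ⟨U, W, hU, rfl, ha, hb, hW⟩ := exists_qnIsSubrep_of_pnIsSubrep hli hc hV
  rw [← mul_neg_finrank_add_sum_eq hab ha hb hW]
  refine mul_neg_of_pos_of_neg hlam
    (h.2 U W hU (fun ⟨hU0, hW0⟩ => hne ?_) fun ⟨hU1, hW1⟩ => hnf ?_)
  · rw [hW0, finrank_bot] at hW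
    exact ⟨by rw [hU0]; rfl, Submodule.finrank_eq_zero.1 (by omega),
      Submodule.finrank_eq_zero.1 (by omega)⟩
  · exact ⟨by simp [hU1], ha.1 (hU1 ▸ mem_univ a), hb.1 (hU1 ▸ mem_univ b)⟩

theorem qnSemistable_of_pnSemistable (hab : a ≠ b) (hθ : ∀ i, 0 ≤ θ i)
    (hT : ∑ i ∈ ({a, b} : Finset (Fin m))ᶜ, θ i < 1) (hlam : 0 < lam)
    (hli : LinearIndependent k ![s a, s b]) (hc : ∀ i, s i.val = (c i).1 • s a + (c i).2 • s b)
    (h : PnSemistable (lam * (θ a - 1)) (lam * (θ b - 1))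
      (fun i : {i : Fin m // i ≠ a ∧ i ≠ b} => lam * θ i.val) c) :
    QnSemistable θ s := by
  intro U W hU
  by_cases hgood : s a ∈ W ∨ s b ∈ W ∨ W = ⊥
  · obtain ⟨W1, W2, hP, ha, hb, hW⟩ := exists_pnIsSubrep_of_qnIsSubrep hli hc hU hgood
    refine nonpos_of_mul_nonpos_right ?_ hlam
    exact (mul_neg_finrank_add_sum_le hab (hθ a) (hθ b) hlam.le ha hb hW).trans (h _ _ _ hP)
  · push Not at hgood
    exact (neg_finrank_add_sum_lt_zero_of_notMem hθ hT hU hgood.2.2 hgood.1 hgood.2.1).le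

theorem qnStable_of_pnStable (hab : a ≠ b) (hθ : ∀ i, 0 ≤ θ i) (hθa : 0 < θ a) (hθb : 0 < θ b)
    (hT : ∑ i ∈ ({a, b} : Finset (Fin m))ᶜ, θ i < 1) (hlam : 0 < lam)
    (hli : LinearIndependent k ![s a, s b]) (hc : ∀ i, s i.val = (c i).1 • s a + (c i).2 • s b)
    (h : PnStable (lam * (θ a - 1)) (lam * (θ b - 1))
      (fun i : {i : Fin m // i ≠ a ∧ i ≠ b} => lam * θ i.val) c) :
    QnStable θ s := by
  refine ⟨qnSemistable_of_pnSemistable hab hθ hT hlam hli hc h.1, fun U W hU hne hnf => ?_⟩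
  by_cases hgood : s a ∈ W ∨ s b ∈ W ∨ W = ⊥
  swap
  · push Not at hgood
    exact neg_finrank_add_sum_lt_zero_of_notMem hθ hT hU hgood.2.2 hgood.1 hgood.2.1
  obtain ⟨W1, W2, hP, ha, hb, hW⟩ := exists_pnIsSubrep_of_qnIsSubrep hli hc hU hgood
  refine neg_of_mul_neg_right ?_ hlam.le
  by_cases hfull : U.subtype (fun i => i ≠ a ∧ i ≠ b) = univ ∧ W1 = ⊤ ∧ W2 = ⊤
  · obtain ⟨hV, rfl, rfl⟩ := hfull
    have hab' : ¬(a ∈ U ∧ b ∈ U) := fun ⟨ha', hb'⟩ => hnf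
      ⟨eq_of_subtype_eq_of_mem_iff (by rw [hV, subtype_univ]) (by simp [ha']) (by simp [hb']),
        Submodule.eq_top_of_finrank_eq (by simp [hW])⟩
    exact (mul_neg_finrank_add_sum_lt hab hθa hθb hlam ha hb hW (by tauto)).trans_le
      (h.1 _ _ _ hP)
  · refine (mul_neg_finrank_add_sum_le hab hθa.le hθb.le hlam.le ha hb hW).trans_lt
      (h.2 _ _ _ hP (fun ⟨hV, hW1, hW2⟩ => hne ?_) hfull)
    subst hW1 hW2
    rw [finrank_bot, add_zero] at hW
    refine ⟨eq_of_subtype_eq_of_mem_iff (U' := ∅) hV ?_ ?_, Submodule.finrank_eq_zero.1 hW⟩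
    · exact iff_of_false (fun h => bot_ne_top (ha h)) (notMem_empty a)
    · exact iff_of_false (fun h => bot_ne_top (hb h)) (notMem_empty b)

end Reduction

theorem qn_stability_iff_pn_stability_general {n : ℕ}
    (a b : Fin (n + 2)) (hab : a ≠ b)
    (θ : Fin (n + 2) → ℚ)
    (hΔ : (∀ i, 0 ≤ θ i ∧ θ i ≤ 1) ∧ ∑ i, θ i = 2)
    (hpos : 0 < ∑ i ∈ ({a, b} : Finset (Fin (n + 2)))ᶜ, θ i)
    (hlt : ∑ i ∈ ({a, b} : Finset (Fin (n + 2)))ᶜ, θ i < θ a + θ b)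
    (lam : ℚ) (hlam : lam = 1 / ∑ i ∈ ({a, b} : Finset (Fin (n + 2)))ᶜ, θ i)
    (s : Fin (n + 2) → Fin 2 → k) :
    (QnSemistable θ s ↔
      (LinearIndependent k ![s a, s b] ∧
        ∀ c : {i : Fin (n + 2) // i ≠ a ∧ i ≠ b} → k × k,
          (∀ i : {i : Fin (n + 2) // i ≠ a ∧ i ≠ b},
            s i.val = (c i).1 • s a + (c i).2 • s b) →
          PnSemistable (lam * (θ a - 1)) (lam * (θ b - 1))
            (fun i : {i : Fin (n + 2) // i ≠ a ∧ i ≠ b} => lam * θ i.val) c)) ∧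
    (QnStable θ s ↔
      (LinearIndependent k ![s a, s b] ∧
        ∀ c : {i : Fin (n + 2) // i ≠ a ∧ i ≠ b} → k × k,
          (∀ i : {i : Fin (n + 2) // i ≠ a ∧ i ≠ b},
            s i.val = (c i).1 • s a + (c i).2 • s b) →
          PnStable (lam * (θ a - 1)) (lam * (θ b - 1))
            (fun i : {i : Fin (n + 2) // i ≠ a ∧ i ≠ b} => lam * θ i.val) c)) := by
  obtain ⟨hθ01, hsum⟩ := hΔ
  have hθ : ∀ i, 0 ≤ θ i := fun i => (hθ01 i).1
  have hsplit : θ a + θ b + ∑ i ∈ ({a, b} : Finset (Fin (n + 2)))ᶜ, θ i = 2 := by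
    rw [← sum_pair hab, sum_add_sum_compl, hsum]
  have hθa : 0 < θ a := by linarith [(hθ01 b).2]
  have hθb : 0 < θ b := by linarith [(hθ01 a).2]
  have hT : ∑ i ∈ ({a, b} : Finset (Fin (n + 2)))ᶜ, θ i < 1 := by linarith
  have hlam0 : 0 < lam := hlam ▸ one_div_pos.2 hpos
  have hcoords (hli : LinearIndependent k ![s a, s b]) :
      ∃ c : {i : Fin (n + 2) // i ≠ a ∧ i ≠ b} → k × k,
        ∀ i, s i.val = (c i).1 • s a + (c i).2 • s b := by
    choose c hc using fun i : {i : Fin (n + 2) // i ≠ a ∧ i ≠ b} =>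
      hli.exists_eq_smul_add_smul (finrank_fin_fun k) (s i)
    exact ⟨c, hc⟩
  refine ⟨⟨fun h => ?_, fun ⟨hli, h⟩ => ?_⟩, ⟨fun h => ?_, fun ⟨hli, h⟩ => ?_⟩⟩
  · have hli := linearIndependent_of_qnSemistable hab (by linarith) h
    exact ⟨hli, fun c hc => pnSemistable_of_qnSemistable hab hlam0.le hli hc h⟩
  · obtain ⟨c, hc⟩ := hcoords hli
    exact qnSemistable_of_pnSemistable hab hθ hT hlam0 hli hc (h c hc)
  · have hli := linearIndependent_of_qnSemistable hab (by linarith) h.1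
    exact ⟨hli, fun c hc => pnStable_of_qnStable hab hlam0 hli hc h⟩
  · obtain ⟨c, hc⟩ := hcoords hli
    exact qnStable_of_pnStable hab hθ hθa hθb hT hlam0 hli hc (h c hc)

/-- A representation `s` of `Q_{n+2}` is `θ`-(semi)stable for `θ ∈ Δ(2,n+2)` with
`0 < ∑_{i≠a,b} θ_i < θ_a + θ_b` if and only if `s_a, s_b` are linearly independent and the
associated representation of `P_n` (given by the coordinates of the `s_i`, `i ≠ a,b`, in
the basis `s_a, s_b`) is (semi)stable for the weight
`(λ(θ_a−1), λ(θ_b−1), (λθ_i)_{i≠a,b})`, where `λ = 1/∑_{i≠a,b} θ_i`. -/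
theorem qn_stability_iff_pn_stability {n : ℕ} (hn : 1 ≤ n)
    (a b : Fin (n + 2)) (hab : a ≠ b)
    (θ : Fin (n + 2) → ℚ)
    (hΔ : (∀ i, 0 ≤ θ i ∧ θ i ≤ 1) ∧ ∑ i, θ i = 2)
    (hpos : 0 < ∑ i ∈ ({a, b} : Finset (Fin (n + 2)))ᶜ, θ i)
    (hlt : ∑ i ∈ ({a, b} : Finset (Fin (n + 2)))ᶜ, θ i < θ a + θ b)
    (lam : ℚ) (hlam : lam = 1 / ∑ i ∈ ({a, b} : Finset (Fin (n + 2)))ᶜ, θ i)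
    (s : Fin (n + 2) → Fin 2 → k) :
    (QnSemistable θ s ↔
      (LinearIndependent k ![s a, s b] ∧
        ∀ c : {i : Fin (n + 2) // i ≠ a ∧ i ≠ b} → k × k,
          (∀ i : {i : Fin (n + 2) // i ≠ a ∧ i ≠ b},
            s i.val = (c i).1 • s a + (c i).2 • s b) →
          PnSemistable (lam * (θ a - 1)) (lam * (θ b - 1))
            (fun i : {i : Fin (n + 2) // i ≠ a ∧ i ≠ b} => lam * θ i.val) c)) ∧
    (QnStable θ s ↔
      (LinearIndependent k ![s a, s b] ∧
        ∀ c : {i : Fin (n + 2) // i ≠ a ∧ i ≠ b} → k × k,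
          (∀ i : {i : Fin (n + 2) // i ≠ a ∧ i ≠ b},
            s i.val = (c i).1 • s a + (c i).2 • s b) →
          PnStable (lam * (θ a - 1)) (lam * (θ b - 1))
            (fun i : {i : Fin (n + 2) // i ≠ a ∧ i ≠ b} => lam * θ i.val) c)) :=
  qn_stability_iff_pn_stability_general a b hab θ hΔ hpos hlt lam hlam s
end
end
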